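/- arXiv:1403.5302 — 2 statements merged into one kernel-verified Lean document; each statement's English description precedes it below -/
import Mathlib

section
/- Suppose the Mellin transform MU of a nonnegative measurable function U on (0,∞) converges absolutely at least in the strip σ ≤ Re(z) ≤ τ, where −∞ < σ < τ < ∞. Let f be a measurable function on (0,∞), and assume: (1) f(1/y) = y^{−ρ} l(y)(1 + O(h(y))) as y → ∞, where ρ ∈ (σ,τ), l is slowly varying with remainder g for some slowly varying g, h belongs to the Zygmund class, and g(y) → 0 and h(y) → 0 as y → ∞; (2) the functions g, 1/l, and 1/g are locally bounded on the interval (x_0,∞) for some x_0 > 0; (3) the function y ↦ y^{τ} f(1/y) is bounded on every interval (0,a] with a > 0. Then U ⋆_M f(x) = MU(ρ)·x^ρ l(1/x)·(1 + O(g(1/x)) + O(h(1/x))) as x → 0. -/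
open Filter Asymptotics MeasureTheory
open Set

section AuxiliaryLemmas

/-- A real sequence eventually bounded by `c` is bounded by some natural number. -/
lemma exists_nat_bound (q : ℕ → ℝ) (c : ℝ) (hq : ∀ᶠ n in atTop, q n ≤ c) :
    ∃ m : ℕ, ∀ n, q n ≤ m := by
  obtain ⟨N, hN⟩ := eventually_atTop.1 hq
  refine ⟨max ⌈c⌉₊ ((Finset.range N).sup (fun n => ⌈q n⌉₊)), fun n => ?_⟩
  rcases le_or_gt N n with hn | hn
  · calc q n ≤ c := hN n hn
      _ ≤ (⌈c⌉₊ : ℝ) := Nat.le_ceil c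
      _ ≤ _ := Nat.cast_le.2 (le_max_left _ _)
  · calc q n ≤ (⌈q n⌉₊ : ℝ) := Nat.le_ceil _
      _ ≤ _ := Nat.cast_le.2 (le_max_of_le_right
            (Finset.le_sup (f := fun n => ⌈q n⌉₊) (Finset.mem_range.2 hn)))

/-- If `φ(2y)/φ(y) → 1` and `φ ≥ 0`, then `φ` is eventually positive. -/
lemma eventually_pos_of_ratio_tendsto_one {φ : ℝ → ℝ} (hnn : ∀ x, 0 ≤ φ x)
    (hr : Tendsto (fun y => φ (2 * y) / φ y) atTop (nhds 1)) :
    ∃ Y : ℝ, 1 ≤ Y ∧ ∀ y, Y ≤ y → 0 < φ y := by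
  have h2 : ∀ᶠ y in atTop, (1:ℝ)/2 < φ (2*y) / φ y :=
    hr.eventually (eventually_gt_nhds (by norm_num))
  obtain ⟨Y, hY⟩ := eventually_atTop.1 h2
  refine ⟨max Y 1, le_max_right _ _, fun y hy => ?_⟩
  have h := hY y (le_trans (le_max_left _ _) hy)
  rcases (hnn y).lt_or_eq with h' | h'
  · exact h'
  · exfalso; rw [← h', div_zero] at h; norm_num at h

/-- Core measure-theoretic step: given two sequences of measurable functions that are
pointwise bounded (in `n`) on the windows `[1,4]` and `[1,2]` respectively, and scaling
factors `lam n ∈ [1,2]`, one can find uniform bounds `m₀, m₁` and, for every `n`,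
points `u = lam n * t` with `u ∈ [1,4]`, `t ∈ [1,2]` at which all the bounds hold. -/
lemma exists_uniform_points (r q : ℕ → ℝ → ℝ)
    (hrm : ∀ n, Measurable (r n)) (hqm : ∀ n, Measurable (q n))
    (hrb : ∀ u ∈ Icc (1:ℝ) 4, ∃ m : ℕ, ∀ n, r n u ≤ m)
    (hqb : ∀ t ∈ Icc (1:ℝ) 2, ∃ m : ℕ, ∀ n, q n t ≤ m)
    (lam : ℕ → ℝ) (hlam : ∀ n, lam n ∈ Icc (1:ℝ) 2) :
    ∃ m₀ m₁ : ℕ, ∀ n, ∃ u t : ℝ, u ∈ Icc (1:ℝ) 4 ∧ t ∈ Icc (1:ℝ) 2 ∧ u = lam n * t ∧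
      (∀ k, r k u ≤ m₀) ∧ (∀ k, q k t ≤ m₁) := by
  set F : ℕ → Set ℝ := fun m => {u ∈ Icc (1:ℝ) 4 | ∀ n, r n u ≤ m} with hF
  set G : ℕ → Set ℝ := fun m => {t ∈ Icc (1:ℝ) 2 | ∀ n, q n t ≤ m} with hG
  have hFmeas : ∀ m, MeasurableSet (F m) := by
    intro m
    have : F m = Icc (1:ℝ) 4 ∩ ⋂ n, {u | r n u ≤ (m:ℝ)} := by
      ext u; simp [hF, mem_iInter]
    rw [this]
    exact measurableSet_Icc.inter (MeasurableSet.iInter fun n =>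
      measurableSet_le (hrm n) measurable_const)
  have hGmeas : ∀ m, MeasurableSet (G m) := by
    intro m
    have : G m = Icc (1:ℝ) 2 ∩ ⋂ n, {t | q n t ≤ (m:ℝ)} := by
      ext u; simp [hG, mem_iInter]
    rw [this]
    exact measurableSet_Icc.inter (MeasurableSet.iInter fun n =>
      measurableSet_le (hqm n) measurable_const)
  have hFmono : Monotone F := by
    intro m m' hmm' u hu
    exact ⟨hu.1, fun n => le_trans (hu.2 n) (by exact_mod_cast hmm')⟩
  have hGmono : Monotone G := by
    intro m m' hmm' u hu
    exact ⟨hu.1, fun n => le_trans (hu.2 n) (by exact_mod_cast hmm')⟩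
  have hFU : ⋃ m, F m = Icc (1:ℝ) 4 := by
    apply subset_antisymm
    · exact iUnion_subset fun m u hu => hu.1
    · intro u hu
      obtain ⟨m, hm⟩ := hrb u hu
      exact mem_iUnion.2 ⟨m, hu, hm⟩
  have hGU : ⋃ m, G m = Icc (1:ℝ) 2 := by
    apply subset_antisymm
    · exact iUnion_subset fun m u hu => hu.1
    · intro u hu
      obtain ⟨m, hm⟩ := hqb u hu
      exact mem_iUnion.2 ⟨m, hu, hm⟩
  have hFt : Tendsto (fun m => volume (F m)) atTop (nhds (ENNReal.ofReal 3)) := by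
    have := tendsto_measure_iUnion_atTop (μ := volume) hFmono
    rwa [hFU, Real.volume_Icc, show (4:ℝ) - 1 = 3 by norm_num] at this
  have hGt : Tendsto (fun m => volume (G m)) atTop (nhds (ENNReal.ofReal 1)) := by
    have := tendsto_measure_iUnion_atTop (μ := volume) hGmono
    rwa [hGU, Real.volume_Icc, show (2:ℝ) - 1 = 1 by norm_num] at this
  have hm₀ : ∃ m₀, ENNReal.ofReal (11/4) < volume (F m₀) := by
    have hlt : ENNReal.ofReal (11/4) < ENNReal.ofReal 3 :=
      (ENNReal.ofReal_lt_ofReal_iff (by norm_num)).2 (by norm_num)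
    exact (hFt.eventually (eventually_gt_nhds hlt)).exists
  have hm₁ : ∃ m₁, ENNReal.ofReal (3/4) < volume (G m₁) := by
    have hlt : ENNReal.ofReal (3/4) < ENNReal.ofReal 1 :=
      (ENNReal.ofReal_lt_ofReal_iff (by norm_num)).2 (by norm_num)
    exact (hGt.eventually (eventually_gt_nhds hlt)).exists
  obtain ⟨m₀, hm₀⟩ := hm₀
  obtain ⟨m₁, hm₁⟩ := hm₁
  refine ⟨m₀, m₁, fun n => ?_⟩
  obtain ⟨hlam1, hlam2⟩ := hlam n
  have hlampos : 0 < lam n := lt_of_lt_of_le one_pos hlam1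
  set B : Set ℝ := (fun u => u * (lam n)⁻¹) ⁻¹' (G m₁) with hB
  have hBsub : B ⊆ Icc (1:ℝ) 4 := by
    intro u hu
    have hmem : u * (lam n)⁻¹ ∈ G m₁ := Set.mem_preimage.1 hu
    obtain ⟨ha, hb⟩ := hmem.1
    have hu' : u = (u * (lam n)⁻¹) * lam n := by field_simp
    have h1 : (1:ℝ)*1 ≤ (u * (lam n)⁻¹) * lam n :=
      mul_le_mul ha hlam1 one_pos.le (le_trans one_pos.le ha)
    have h2 : (u * (lam n)⁻¹) * lam n ≤ 2*2 :=
      mul_le_mul hb hlam2 hlampos.le (by norm_num)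
    rw [← hu'] at h1 h2
    constructor <;> linarith
  have hBvol : ENNReal.ofReal (3/4) < volume B := by
    have : volume B = ENNReal.ofReal |((lam n)⁻¹)⁻¹| * volume (G m₁) :=
      Real.volume_preimage_mul_right (inv_ne_zero hlampos.ne') _
    rw [this, inv_inv, abs_of_pos hlampos]
    calc ENNReal.ofReal (3/4) < volume (G m₁) := hm₁
      _ = 1 * volume (G m₁) := (one_mul _).symm
      _ ≤ ENNReal.ofReal (lam n) * volume (G m₁) :=
          mul_le_mul_left (by simpa using ENNReal.one_le_ofReal.2 hlam1) _
  have hkey : volume (F m₀ ∩ B) ≠ 0 := by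
    intro h0
    have hUn : volume (F m₀ ∪ B) ≤ ENNReal.ofReal 3 := by
      have : F m₀ ∪ B ⊆ Icc (1:ℝ) 4 :=
        union_subset (fun u hu => hu.1) hBsub
      calc volume (F m₀ ∪ B) ≤ volume (Icc (1:ℝ) 4) := measure_mono this
        _ = ENNReal.ofReal 3 := by rw [Real.volume_Icc]; norm_num
    have hBmeas : MeasurableSet B :=
      (hGmeas m₁).preimage (measurable_id.mul_const ((lam n)⁻¹))
    have hsum := measure_union_add_inter (μ := volume) (t := B) (F m₀) hBmeas
    rw [h0, add_zero] at hsum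
    have hlt : ENNReal.ofReal (7/2) < volume (F m₀) + volume B := by
      calc ENNReal.ofReal (7/2) = ENNReal.ofReal (11/4) + ENNReal.ofReal (3/4) := by
            rw [← ENNReal.ofReal_add (by norm_num) (by norm_num)]; norm_num
        _ < volume (F m₀) + volume B := ENNReal.add_lt_add hm₀ hBvol
    rw [← hsum] at hlt
    have : ENNReal.ofReal (7/2) < ENNReal.ofReal 3 := lt_of_lt_of_le hlt hUn
    rw [ENNReal.ofReal_lt_ofReal_iff (by norm_num)] at this
    norm_num at this
  obtain ⟨u, huF, huB⟩ := nonempty_of_measure_ne_zero hkey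
  have hmem : u * (lam n)⁻¹ ∈ G m₁ := Set.mem_preimage.1 huB
  refine ⟨u, u * (lam n)⁻¹, huF.1, hmem.1, ?_, huF.2, hmem.2⟩
  field_simp

/-- Uniform two-sided bound for the slowly varying function `g` over scaling
factors in `[1,2]`. -/
lemma unif_bound_g (g : ℝ → ℝ) (hg_meas : Measurable g) (hg_nonneg : ∀ x, 0 ≤ g x)
    (hg_slow : ∀ lam : ℝ, 0 < lam →
      Tendsto (fun y => g (lam * y) / g y) atTop (nhds 1)) :
    ∃ K : ℝ, 1 ≤ K ∧ ∃ Y : ℝ, 1 ≤ Y ∧ (∀ y, Y ≤ y → 0 < g y) ∧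
      ∀ y, Y ≤ y → ∀ lam ∈ Icc (1:ℝ) 2,
      g (lam * y) ≤ K * g y ∧ g y ≤ K * g (lam * y) := by
  obtain ⟨Yp, hYp1, hYp⟩ := eventually_pos_of_ratio_tendsto_one hg_nonneg (hg_slow 2 two_pos)
  by_contra hcon
  push_neg at hcon
  have hcon' : ∀ n : ℕ, ∃ y, max ((n:ℝ)+1) Yp ≤ y ∧ ∃ lam, lam ∈ Icc (1:ℝ) 2 ∧
      ¬(g (lam * y) ≤ ((n:ℝ)+1) * g y ∧ g y ≤ ((n:ℝ)+1) * g (lam * y)) := by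
    intro n
    have h1 : (1:ℝ) ≤ (n:ℝ)+1 := le_add_of_nonneg_left (Nat.cast_nonneg n)
    have h2 : (1:ℝ) ≤ max ((n:ℝ)+1) Yp := le_trans hYp1 (le_max_right _ _)
    obtain ⟨y, hy, lam, hlam, hbad⟩ := hcon ((n:ℝ)+1) h1 (max ((n:ℝ)+1) Yp) h2
      (fun y hy => hYp y (le_trans (le_max_right _ _) hy))
    exact ⟨y, hy, lam, hlam, fun hh => absurd hh.2 (not_le.2 (hbad hh.1))⟩
  choose ys hys lams hlams hbad using hcon'
  have hyp : ∀ n : ℕ, Yp ≤ ys n := fun n => le_trans (le_max_right _ _) (hys n)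
  have hy1 : ∀ n : ℕ, (n:ℝ) + 1 ≤ ys n := fun n => le_trans (le_max_left _ _) (hys n)
  have hypos : ∀ n : ℕ, 0 < ys n := fun n => lt_of_lt_of_le (lt_of_lt_of_le one_pos hYp1) (hyp n)
  have hyt : Tendsto ys atTop atTop :=
    tendsto_atTop_mono (fun n => by linarith [hy1 n]) tendsto_natCast_atTop_atTop
  set zs : ℕ → ℝ := fun n => lams n * ys n with hzs
  have hzy : ∀ n : ℕ, ys n ≤ zs n := fun n =>
    le_mul_of_one_le_left (hypos n).le (hlams n).1
  have hzt : Tendsto zs atTop atTop := tendsto_atTop_mono hzy hyt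
  have hgpos : ∀ n, ∀ u : ℝ, 1 ≤ u → 0 < g (u * ys n) := fun n u hu =>
    hYp _ (le_trans (hyp n) (le_mul_of_one_le_left (hypos n).le hu))
  have hgposz : ∀ n, ∀ u : ℝ, 1 ≤ u → 0 < g (u * zs n) := fun n u hu =>
    hYp _ (le_trans (le_trans (hyp n) (hzy n)) (le_mul_of_one_le_left
      (lt_of_lt_of_le (hypos n) (hzy n)).le hu))
  -- the two sequences of ratio functions
  set r : ℕ → ℝ → ℝ := fun n u => max (g (u * ys n) / g (ys n)) (g (ys n) / g (u * ys n))
    with hr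
  set q : ℕ → ℝ → ℝ := fun n u => max (g (u * zs n) / g (zs n)) (g (zs n) / g (u * zs n))
    with hq
  have hrm : ∀ n, Measurable (r n) := fun n =>
    ((hg_meas.comp (measurable_id.mul_const _)).div measurable_const).max
      (measurable_const.div (hg_meas.comp (measurable_id.mul_const _)))
  have hqm : ∀ n, Measurable (q n) := fun n =>
    ((hg_meas.comp (measurable_id.mul_const _)).div measurable_const).max
      (measurable_const.div (hg_meas.comp (measurable_id.mul_const _)))
  have key : ∀ (w : ℕ → ℝ), Tendsto w atTop atTop → (∀ n, ∀ u : ℝ, 1 ≤ u → 0 < g (u * w n)) →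
      (∀ n, 0 < g (w n)) → ∀ u : ℝ, 1 ≤ u →
      ∃ m : ℕ, ∀ n, max (g (u * w n) / g (w n)) (g (w n) / g (u * w n)) ≤ m := by
    intro w hw hposu hpos u hu
    have hut : Tendsto (fun n => g (u * w n) / g (w n)) atTop (nhds 1) :=
      (hg_slow u (lt_of_lt_of_le one_pos hu)).comp hw
    have hev : ∀ᶠ n in atTop, max (g (u * w n) / g (w n)) (g (w n) / g (u * w n)) ≤ 2 := by
      filter_upwards [hut.eventually (eventually_gt_nhds (show (1:ℝ)/2 < 1 by norm_num)),
        hut.eventually (eventually_lt_nhds (show (1:ℝ) < 2 by norm_num))] with n h1 h2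
      have hgw : 0 < g (w n) := hpos n
      have hgu : 0 < g (u * w n) := hposu n u hu
      refine max_le h2.le ?_
      rw [div_le_iff₀ hgu]
      have h1' := (lt_div_iff₀ hgw).1 h1
      linarith
    exact exists_nat_bound _ 2 hev
  obtain ⟨m₀, m₁, hmain⟩ := exists_uniform_points r q hrm hqm
    (fun u hu => key ys hyt hgpos (fun n => hYp _ (hyp n)) u hu.1)
    (fun u hu => key zs hzt hgposz (fun n => hYp _ (le_trans (hyp n) (hzy n))) u hu.1)
    lams hlams
  -- derive the contradiction at n = m₀ * m₁
  set n := m₀ * m₁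
  obtain ⟨u, t, hu, ht, hut, hru, hqt⟩ := hmain n
  have hgy : 0 < g (ys n) := hYp _ (hyp n)
  have hgz : 0 < g (zs n) := hYp _ (le_trans (hyp n) (hzy n))
  have hgu : 0 < g (u * ys n) := hgpos n u hu.1
  have huyz : u * ys n = t * zs n := by rw [hut, hzs]; ring
  have a1 : g (u * ys n) ≤ m₀ * g (ys n) := by
    have := le_trans (le_max_left _ _) (hru n)
    rwa [div_le_iff₀ hgy] at this
  have a2 : g (ys n) ≤ m₀ * g (u * ys n) := by
    have := le_trans (le_max_right _ _) (hru n)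
    rwa [div_le_iff₀ hgu] at this
  have b1 : g (t * zs n) ≤ m₁ * g (zs n) := by
    have := le_trans (le_max_left _ _) (hqt n)
    rwa [div_le_iff₀ hgz] at this
  have b2 : g (zs n) ≤ m₁ * g (t * zs n) := by
    have := le_trans (le_max_right _ _) (hqt n)
    rwa [div_le_iff₀ (huyz ▸ hgu)] at this
  have hm01 : ((m₀ * m₁ : ℕ) : ℝ) ≤ (n:ℝ) + 1 := by
    simp only [n]; push_cast; linarith
  refine hbad n ⟨?_, ?_⟩
  · -- g (lams n * ys n) ≤ (n+1) * g (ys n)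
    calc g (lams n * ys n) = g (zs n) := by rw [hzs]
      _ ≤ m₁ * g (t * zs n) := b2
      _ = m₁ * g (u * ys n) := by rw [huyz]
      _ ≤ m₁ * (m₀ * g (ys n)) := by
          exact mul_le_mul_of_nonneg_left a1 (Nat.cast_nonneg m₁)
      _ = ((m₀ * m₁ : ℕ) : ℝ) * g (ys n) := by push_cast; ring
      _ ≤ ((n:ℝ) + 1) * g (ys n) := mul_le_mul_of_nonneg_right hm01 (hg_nonneg _)
  · calc g (ys n) ≤ m₀ * g (u * ys n) := a2
      _ = m₀ * g (t * zs n) := by rw [huyz]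
      _ ≤ m₀ * (m₁ * g (zs n)) := mul_le_mul_of_nonneg_left b1 (Nat.cast_nonneg m₀)
      _ = ((m₀ * m₁ : ℕ) : ℝ) * g (zs n) := by push_cast; ring
      _ ≤ ((n:ℝ) + 1) * g (zs n) := mul_le_mul_of_nonneg_right hm01 (hg_nonneg _)
      _ = ((n:ℝ) + 1) * g (lams n * ys n) := by rw [hzs]

/-- Uniform remainder bound for `l` over scaling factors in `[1,2]`:
`|l(λy) − l(y)| ≤ K g(y) l(y)` uniformly for `λ ∈ [1,2]` and large `y`. -/
lemma unif_bound_l (l g : ℝ → ℝ) (hl_meas : Measurable l) (hl_nonneg : ∀ x, 0 ≤ l x)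
    (hg_meas : Measurable g) (hg_nonneg : ∀ x, 0 ≤ g x)
    (hg_slow : ∀ lam : ℝ, 0 < lam →
      Tendsto (fun y => g (lam * y) / g y) atTop (nhds 1))
    (hg_zero : Tendsto g atTop (nhds 0))
    (hl_rem : ∀ lam : ℝ, 1 < lam →
      (fun y => l (lam * y) / l y - 1) =O[atTop] g) :
    ∃ K : ℝ, 1 ≤ K ∧ ∃ Y : ℝ, 1 ≤ Y ∧ (∀ y, Y ≤ y → 0 < l y) ∧ (∀ y, Y ≤ y → 0 < g y) ∧
      ∀ y, Y ≤ y → ∀ lam ∈ Icc (1:ℝ) 2,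
      |l (lam * y) - l y| ≤ K * (g y * l y) := by
  obtain ⟨Kg, hKg1, Yg, hYg1, hYgpos, hUBg⟩ := unif_bound_g g hg_meas hg_nonneg hg_slow
  have hlrat : Tendsto (fun y => l (2 * y) / l y) atTop (nhds 1) := by
    have h0 := (hl_rem 2 one_lt_two).trans_tendsto hg_zero
    have := h0.add_const 1
    simpa using this
  obtain ⟨Ypl, hYpl1, hYpl⟩ := eventually_pos_of_ratio_tendsto_one hl_nonneg hlrat
  by_contra hcon
  push_neg at hcon
  set YP := max Yg Ypl with hYP
  have hYP1 : (1:ℝ) ≤ YP := le_trans hYg1 (le_max_left _ _)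
  have hcon' : ∀ n : ℕ, ∃ y, max ((n:ℝ)+1) YP ≤ y ∧ ∃ lam, lam ∈ Icc (1:ℝ) 2 ∧
      ((n:ℝ)+1) * (g y * l y) < |l (lam * y) - l y| := by
    intro n
    have h1 : (1:ℝ) ≤ (n:ℝ)+1 := le_add_of_nonneg_left (Nat.cast_nonneg n)
    have h2 : (1:ℝ) ≤ max ((n:ℝ)+1) YP := le_trans h1 (le_max_left _ _)
    obtain ⟨y, hy, lam, hlam, hbad⟩ := hcon ((n:ℝ)+1) h1 (max ((n:ℝ)+1) YP) h2
      (fun y hy => hYpl y (le_trans (le_trans (le_max_right _ _) (le_max_right _ _)) hy))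
      (fun y hy => hYgpos y (le_trans (le_trans (le_max_left _ _) (le_max_right _ _)) hy))
    exact ⟨y, hy, lam, hlam, hbad⟩
  choose ys hys lams hlams hbad using hcon'
  have hyg : ∀ n : ℕ, Yg ≤ ys n :=
    fun n => le_trans (le_trans (le_max_left _ _) (le_max_right _ _)) (hys n)
  have hyl : ∀ n : ℕ, Ypl ≤ ys n :=
    fun n => le_trans (le_trans (le_max_right _ _) (le_max_right _ _)) (hys n)
  have hy1 : ∀ n : ℕ, (n:ℝ) + 1 ≤ ys n := fun n => le_trans (le_max_left _ _) (hys n)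
  have hypos : ∀ n : ℕ, 0 < ys n := fun n => lt_of_lt_of_le (lt_of_lt_of_le one_pos hYg1) (hyg n)
  have hyt : Tendsto ys atTop atTop :=
    tendsto_atTop_mono (fun n => by linarith [hy1 n]) tendsto_natCast_atTop_atTop
  set zs : ℕ → ℝ := fun n => lams n * ys n with hzs
  have hzy : ∀ n : ℕ, ys n ≤ zs n := fun n =>
    le_mul_of_one_le_left (hypos n).le (hlams n).1
  have hzt : Tendsto zs atTop atTop := tendsto_atTop_mono hzy hyt
  set r : ℕ → ℝ → ℝ := fun n u => |l (u * ys n) - l (ys n)| / (g (ys n) * l (ys n)) with hr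
  set q : ℕ → ℝ → ℝ := fun n u => |l (u * zs n) - l (zs n)| / (g (zs n) * l (zs n)) with hq
  have hrm : ∀ n, Measurable (r n) := fun n =>
    (((hl_meas.comp (measurable_id.mul_const _)).sub measurable_const).abs).div
      measurable_const
  have hqm : ∀ n, Measurable (q n) := fun n =>
    (((hl_meas.comp (measurable_id.mul_const _)).sub measurable_const).abs).div
      measurable_const
  have key : ∀ (w : ℕ → ℝ), Tendsto w atTop atTop → (∀ n, Yg ≤ w n) → (∀ n, Ypl ≤ w n) →
      ∀ u : ℝ, 1 ≤ u →
      ∃ m : ℕ, ∀ n, |l (u * w n) - l (w n)| / (g (w n) * l (w n)) ≤ m := by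
    intro w hw hwg hwl u hu
    rcases eq_or_lt_of_le hu with hu1 | hu1
    · refine ⟨0, fun n => ?_⟩
      rw [← hu1, one_mul, sub_self, abs_zero, zero_div]
      simp
    · obtain ⟨c, hc⟩ := isBigO_iff.1 (hl_rem u hu1)
      have hev : ∀ᶠ n in atTop, |l (u * w n) - l (w n)| / (g (w n) * l (w n)) ≤ c := by
        filter_upwards [hw.eventually hc] with n hn
        have hgw : 0 < g (w n) := hYgpos _ (hwg n)
        have hlw : 0 < l (w n) := hYpl _ (hwl n)
        rw [Real.norm_eq_abs, Real.norm_eq_abs, div_sub_one hlw.ne', abs_div,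
          abs_of_pos hlw, abs_of_nonneg (hg_nonneg _)] at hn
        rw [div_le_iff₀ (mul_pos hgw hlw)]
        rw [div_le_iff₀ hlw] at hn
        calc |l (u * w n) - l (w n)| ≤ c * g (w n) * l (w n) := hn
          _ = c * (g (w n) * l (w n)) := by ring
      exact exists_nat_bound _ c hev
  obtain ⟨m₀, m₁, hmain⟩ := exists_uniform_points r q hrm hqm
    (fun u hu => key ys hyt hyg hyl u hu.1)
    (fun u hu => key zs hzt (fun n => le_trans (hyg n) (hzy n))
      (fun n => le_trans (hyl n) (hzy n)) u hu.1)
    lams hlams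
  -- choose a good n
  have hsm : ∀ᶠ n : ℕ in atTop, g (ys n) * (m₁ * Kg) ≤ 1/2 ∧ g (ys n) * m₀ ≤ 1/2 := by
    have hgys : Tendsto (fun n => g (ys n)) atTop (nhds 0) := hg_zero.comp hyt
    have hpos : (0:ℝ) < 1/(2 * (m₁ * Kg + m₀ + 1)) := by positivity
    filter_upwards [hgys.eventually (eventually_le_nhds hpos)] with n hn
    have h1 : (1:ℝ) ≤ (m₁:ℝ) * Kg + m₀ + 1 := by
      have h2 : (0:ℝ) ≤ (m₁:ℝ) * Kg := by positivity
      have h3 : (0:ℝ) ≤ (m₀:ℝ) := Nat.cast_nonneg _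
      linarith
    have hgn : 0 ≤ g (ys n) := hg_nonneg _
    constructor
    · calc g (ys n) * (m₁ * Kg) ≤ (1/(2 * (m₁ * Kg + m₀ + 1))) * (m₁ * Kg) :=
            mul_le_mul_of_nonneg_right hn (by positivity)
        _ ≤ 1/2 := by
            rw [div_mul_eq_mul_div, div_le_div_iff₀ (by positivity) (by norm_num)]
            nlinarith [Nat.cast_nonneg (α := ℝ) m₀, Nat.cast_nonneg (α := ℝ) m₁]
    · calc g (ys n) * m₀ ≤ (1/(2 * (m₁ * Kg + m₀ + 1))) * m₀ :=
            mul_le_mul_of_nonneg_right hn (Nat.cast_nonneg _)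
        _ ≤ 1/2 := by
            rw [div_mul_eq_mul_div, div_le_div_iff₀ (by positivity) (by norm_num)]
            nlinarith [Nat.cast_nonneg (α := ℝ) m₀, Nat.cast_nonneg (α := ℝ) m₁]
  obtain ⟨n, hn1, hn2⟩ := (hsm.and (eventually_ge_atTop ⌈3 * (m₁:ℝ) * Kg + m₀⌉₊)).exists
  obtain ⟨hsm1, hsm2⟩ := hn1
  obtain ⟨u, t, hu, ht, hut, hru, hqt⟩ := hmain n
  have hgy : 0 < g (ys n) := hYgpos _ (hyg n)
  have hgz : 0 < g (zs n) := hYgpos _ (le_trans (hyg n) (hzy n))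
  have hly : 0 < l (ys n) := hYpl _ (hyl n)
  have hlz : 0 < l (zs n) := hYpl _ (le_trans (hyl n) (hzy n))
  have huyz : u * ys n = t * zs n := by rw [hut, hzs]; ring
  have c1 : |l (u * ys n) - l (ys n)| ≤ m₀ * (g (ys n) * l (ys n)) := by
    have := hru n
    rwa [hr, div_le_iff₀ (mul_pos hgy hly)] at this
  have c2 : |l (t * zs n) - l (zs n)| ≤ m₁ * (g (zs n) * l (zs n)) := by
    have := hqt n
    rwa [hq, div_le_iff₀ (mul_pos hgz hlz)] at this
  have gzb : g (zs n) ≤ Kg * g (ys n) := (hUBg (ys n) (hyg n) (lams n) (hlams n)).1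
  set a := l (ys n)
  set b := l (zs n)
  set d := l (u * ys n)
  have hd2 : l (t * zs n) = d := by rw [← huyz]
  rw [hd2] at c2
  -- b ≤ 2 d and d ≤ (3/2) a, hence b ≤ 3 a
  have hm1gz : (m₁:ℝ) * g (zs n) ≤ 1/2 := by
    calc (m₁:ℝ) * g (zs n) ≤ (m₁:ℝ) * (Kg * g (ys n)) :=
          mul_le_mul_of_nonneg_left gzb (Nat.cast_nonneg _)
      _ = g (ys n) * (m₁ * Kg) := by ring
      _ ≤ 1/2 := hsm1
  have habs1 : |b - d| ≤ m₁ * (g (zs n) * l (zs n)) := by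
    rw [abs_sub_comm]; exact c2
  have hb2d : b ≤ 2 * d := by
    have h1 : b - d ≤ m₁ * (g (zs n) * b) := le_trans (le_abs_self _) habs1
    nlinarith [hlz]
  have hd32 : d ≤ (3/2) * a := by
    have h1 : d - a ≤ m₀ * (g (ys n) * a) := le_trans (le_abs_self _) c1
    nlinarith [hly, hsm2]
  have hb3a : b ≤ 3 * a := by linarith
  have hfinal : |b - a| ≤ (3 * m₁ * Kg + m₀) * (g (ys n) * a) := by
    calc |b - a| ≤ |b - d| + |d - a| := abs_sub_le _ _ _
      _ ≤ m₁ * (g (zs n) * b) + m₀ * (g (ys n) * a) := add_le_add habs1 c1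
      _ ≤ m₁ * ((Kg * g (ys n)) * (3 * a)) + m₀ * (g (ys n) * a) := by
          refine add_le_add_left (mul_le_mul_of_nonneg_left ?_ (Nat.cast_nonneg _)) _
          exact mul_le_mul gzb hb3a (hl_nonneg _) (by positivity)
      _ = (3 * m₁ * Kg + m₀) * (g (ys n) * a) := by ring
  have hbad' := hbad n
  have hba : |l (lams n * ys n) - l (ys n)| = |b - a| := rfl
  rw [hba] at hbad'
  have hglpos : 0 < g (ys n) * a := mul_pos hgy hly
  have hlt : ((n:ℝ) + 1) < 3 * m₁ * Kg + m₀ := by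
    have := lt_of_lt_of_le hbad' hfinal
    exact (mul_lt_mul_iff_left₀ hglpos).1 this
  have hge : 3 * (m₁:ℝ) * Kg + m₀ ≤ (n:ℝ) + 1 := by
    calc 3 * (m₁:ℝ) * Kg + m₀ ≤ (⌈3 * (m₁:ℝ) * Kg + m₀⌉₊ : ℝ) := Nat.le_ceil _
      _ ≤ (n:ℝ) := Nat.cast_le.2 hn2
      _ ≤ (n:ℝ) + 1 := by linarith
  linarith

lemma chain_up (φ : ℝ → ℝ) {Y ε : ℝ} (hY : 1 ≤ Y) (hε : 0 ≤ ε)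
    (hstep : ∀ w, Y ≤ w → φ (2 * w) ≤ (1 + ε) * φ w) :
    ∀ n : ℕ, ∀ y, Y ≤ y → φ (2 ^ n * y) ≤ (1 + ε) ^ n * φ y := by
  intro n
  induction n with
  | zero => intro y hy; simp
  | succ n ih =>
    intro y hy
    have hy0 : (0:ℝ) ≤ y := le_trans (le_trans one_pos.le hY) hy
    have hbase : Y ≤ 2 ^ n * y := le_trans hy (le_mul_of_one_le_left hy0 (one_le_pow₀ one_le_two))
    calc φ (2 ^ (n+1) * y) = φ (2 * (2 ^ n * y)) := by ring_nf
      _ ≤ (1 + ε) * φ (2 ^ n * y) := hstep _ hbase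
      _ ≤ (1 + ε) * ((1 + ε) ^ n * φ y) := mul_le_mul_of_nonneg_left (ih y hy) (by linarith)
      _ = (1 + ε) ^ (n+1) * φ y := by ring

lemma chain_down (φ : ℝ → ℝ) {Y ε : ℝ} (hY : 1 ≤ Y) (hε : 0 ≤ ε)
    (hstep : ∀ w, Y ≤ w → φ w ≤ (1 + ε) * φ (2 * w)) :
    ∀ n : ℕ, ∀ y, Y ≤ y → φ y ≤ (1 + ε) ^ n * φ (2 ^ n * y) := by
  intro n
  induction n with
  | zero => intro y hy; simp
  | succ n ih =>
    intro y hy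
    have hy0 : (0:ℝ) ≤ y := le_trans (le_trans one_pos.le hY) hy
    have hbase : Y ≤ 2 ^ n * y := le_trans hy (le_mul_of_one_le_left hy0 (one_le_pow₀ one_le_two))
    calc φ y ≤ (1 + ε) ^ n * φ (2 ^ n * y) := ih y hy
      _ ≤ (1 + ε) ^ n * ((1 + ε) * φ (2 * (2 ^ n * y))) :=
          mul_le_mul_of_nonneg_left (hstep _ hbase) (by positivity)
      _ = (1 + ε) ^ (n+1) * φ (2 ^ (n+1) * y) := by ring_nf
      
lemma dyadic {r : ℝ} (hr : 1 ≤ r) :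
    ∃ n : ℕ, ∃ μ : ℝ, 1 ≤ μ ∧ μ ≤ 2 ∧ r = μ * 2 ^ n ∧ (2:ℝ) ^ n ≤ r := by
  have hrpos : 0 < r := lt_of_lt_of_le one_pos hr
  set n := ⌊Real.logb 2 r⌋₊ with hn
  have hlog0 : 0 ≤ Real.logb 2 r := Real.logb_nonneg one_lt_two hr
  have h2n : (2:ℝ) ^ n ≤ r := by
    have h1 : (n:ℝ) ≤ Real.logb 2 r := Nat.floor_le hlog0
    calc (2:ℝ) ^ n = (2:ℝ) ^ (n:ℝ) := (Real.rpow_natCast 2 n).symm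
      _ ≤ (2:ℝ) ^ (Real.logb 2 r) := Real.rpow_le_rpow_of_exponent_le one_le_two h1
      _ = r := Real.rpow_logb two_pos (by norm_num) hrpos
  have hup : r < 2 * 2 ^ n := by
    have h1 : Real.logb 2 r < (n:ℝ) + 1 := by
      have := Nat.lt_floor_add_one (Real.logb 2 r)
      exact_mod_cast this
    calc r = (2:ℝ) ^ (Real.logb 2 r) := (Real.rpow_logb two_pos (by norm_num) hrpos).symm
      _ < (2:ℝ) ^ ((n:ℝ) + 1) := Real.rpow_lt_rpow_of_exponent_lt one_lt_two h1
      _ = 2 * 2 ^ n := by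
          rw [Real.rpow_add two_pos, Real.rpow_natCast, Real.rpow_one]; ring
  have hpow : (0:ℝ) < 2 ^ n := by positivity
  refine ⟨n, r / 2 ^ n, ?_, ?_, ?_, h2n⟩
  · rw [le_div_iff₀ hpow, one_mul]; exact h2n
  · rw [div_le_iff₀ hpow]; linarith
  · field_simp

lemma potter_aux (φ : ℝ → ℝ) {K Y ε δ : ℝ} (hK : 1 ≤ K) (hY : 1 ≤ Y) (hδ : 0 < δ)
    (hεδ : (1:ℝ) + ε = (2:ℝ) ^ δ)
    (hUB : ∀ y, Y ≤ y → ∀ lam ∈ Icc (1:ℝ) 2, φ (lam * y) ≤ K * φ y ∧ φ y ≤ K * φ (lam * y))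
    (hstep : ∀ w, Y ≤ w → φ (2 * w) ≤ (1 + ε) * φ w ∧ φ w ≤ (1 + ε) * φ (2 * w))
    (hφnn : ∀ w, 0 ≤ φ w) :
    ∀ y z, Y ≤ y → Y ≤ z → y ≤ z →
      φ z ≤ K * (z/y) ^ δ * φ y ∧ φ y ≤ K * (z/y) ^ δ * φ z := by
  intro y z hy hz hyz
  have hε : 0 ≤ ε := by
    have h1 : (1:ℝ) ≤ (2:ℝ) ^ δ := Real.one_le_rpow one_le_two hδ.le
    linarith
  have hypos : 0 < y := lt_of_lt_of_le one_pos (le_trans hY hy)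
  have hr : 1 ≤ z / y := (one_le_div hypos).2 hyz
  obtain ⟨n, μ, hμ1, hμ2, hreq, h2n⟩ := dyadic hr
  have hz' : z = μ * (2 ^ n * y) := by
    have : z = (z / y) * y := by field_simp
    rw [this, hreq]; ring
  have hbase : Y ≤ 2 ^ n * y := le_trans hy
    (le_mul_of_one_le_left (le_trans (le_trans one_pos.le hY) hy) (one_le_pow₀ one_le_two))
  -- the key power comparison
  have hpow : ((1:ℝ) + ε) ^ n ≤ (z/y) ^ δ := by
    have h1 : ((1:ℝ) + ε) ^ n = ((2:ℝ) ^ n) ^ δ := by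
      rw [hεδ, ← Real.rpow_natCast ((2:ℝ)^δ) n, ← Real.rpow_natCast (2:ℝ) n,
        ← Real.rpow_mul (by norm_num), ← Real.rpow_mul (by norm_num), mul_comm]
    rw [h1]
    exact Real.rpow_le_rpow (by positivity) h2n hδ.le
  constructor
  · calc φ z = φ (μ * (2 ^ n * y)) := by rw [hz']
      _ ≤ K * φ (2 ^ n * y) := (hUB _ hbase μ ⟨hμ1, hμ2⟩).1
      _ ≤ K * ((1 + ε) ^ n * φ y) := by
          refine mul_le_mul_of_nonneg_left ?_ (by linarith)
          exact chain_up φ hY hε (fun w hw => (hstep w hw).1) n y hy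
      _ = (1 + ε) ^ n * (K * φ y) := by ring
      _ ≤ (z/y) ^ δ * (K * φ y) := by
          refine mul_le_mul_of_nonneg_right hpow ?_
          exact mul_nonneg (by linarith) (hφnn y)
      _ = K * (z/y) ^ δ * φ y := by ring
  · calc φ y ≤ (1 + ε) ^ n * φ (2 ^ n * y) :=
          chain_down φ hY hε (fun w hw => (hstep w hw).2) n y hy
      _ ≤ (1 + ε) ^ n * (K * φ (μ * (2 ^ n * y))) :=
          mul_le_mul_of_nonneg_left (hUB _ hbase μ ⟨hμ1, hμ2⟩).2 (by positivity)
      _ = (1 + ε) ^ n * (K * φ z) := by rw [← hz']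
      _ ≤ (z/y) ^ δ * (K * φ z) := by
          refine mul_le_mul_of_nonneg_right hpow ?_
          exact mul_nonneg (by linarith) (hφnn z)
      _ = K * (z/y) ^ δ * φ z := by ring

lemma potter_sym (φ : ℝ → ℝ) {K Y ε δ : ℝ} (hK : 1 ≤ K) (hY : 1 ≤ Y) (hδ : 0 < δ)
    (hεδ : (1:ℝ) + ε = (2:ℝ) ^ δ)
    (hUB : ∀ y, Y ≤ y → ∀ lam ∈ Icc (1:ℝ) 2, φ (lam * y) ≤ K * φ y ∧ φ y ≤ K * φ (lam * y))
    (hstep : ∀ w, Y ≤ w → φ (2 * w) ≤ (1 + ε) * φ w ∧ φ w ≤ (1 + ε) * φ (2 * w))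
    (hφnn : ∀ w, 0 ≤ φ w) :
    ∀ y z, Y ≤ y → Y ≤ z → φ z ≤ K * (max (z/y) (y/z)) ^ δ * φ y := by
  intro y z hy hz
  have hypos : 0 < y := lt_of_lt_of_le one_pos (le_trans hY hy)
  have hzpos : 0 < z := lt_of_lt_of_le one_pos (le_trans hY hz)
  rcases le_total y z with hyz | hzy
  · have hmax : max (z/y) (y/z) = z/y := by
      apply max_eq_left
      calc y/z ≤ 1 := by rw [div_le_one hzpos]; exact hyz
        _ ≤ z/y := (one_le_div hypos).2 hyz
    rw [hmax]
    exact (potter_aux φ hK hY hδ hεδ hUB hstep hφnn y z hy hz hyz).1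
  · have hmax : max (z/y) (y/z) = y/z := by
      apply max_eq_right
      calc z/y ≤ 1 := by rw [div_le_one hypos]; exact hzy
        _ ≤ y/z := (one_le_div hzpos).2 hzy
    rw [hmax]
    exact (potter_aux φ hK hY hδ hεδ hUB hstep hφnn z y hz hy hzy).2

lemma potter_g (g : ℝ → ℝ) (hg_meas : Measurable g) (hg_nonneg : ∀ x, 0 ≤ g x)
    (hg_slow : ∀ lam : ℝ, 0 < lam →
      Tendsto (fun y => g (lam * y) / g y) atTop (nhds 1))
    {δ : ℝ} (hδ : 0 < δ) :
    ∃ K : ℝ, 1 ≤ K ∧ ∃ Y : ℝ, 1 ≤ Y ∧ (∀ y, Y ≤ y → 0 < g y) ∧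
      ∀ y z, Y ≤ y → Y ≤ z → g z ≤ K * (max (z/y) (y/z)) ^ δ * g y := by
  obtain ⟨K, hK1, YU, hYU1, hYUpos, hUB⟩ := unif_bound_g g hg_meas hg_nonneg hg_slow
  set ε := (2:ℝ) ^ δ - 1 with hε
  have hεδ : (1:ℝ) + ε = (2:ℝ) ^ δ := by ring
  have hεpos : 0 < ε := by
    have : (1:ℝ) < (2:ℝ) ^ δ := Real.one_lt_rpow_iff_of_pos two_pos |>.2 (Or.inl ⟨one_lt_two, hδ⟩)
    linarith
  have hinv : ((1:ℝ) + ε)⁻¹ < 1 := by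
    rw [inv_lt_one_iff₀]; right; linarith
  have hstep' : ∀ᶠ w in atTop, g (2 * w) / g w < 1 + ε ∧ ((1:ℝ) + ε)⁻¹ < g (2 * w) / g w :=
    ((hg_slow 2 two_pos).eventually (eventually_lt_nhds (by linarith))).and
      ((hg_slow 2 two_pos).eventually (eventually_gt_nhds hinv))
  obtain ⟨Ys, hYs⟩ := eventually_atTop.1 hstep'
  refine ⟨K, hK1, max YU (max Ys 1), le_trans le_rfl (le_trans (le_max_right _ _)
    (le_max_right _ _)), fun y hy => hYUpos y (le_trans (le_max_left _ _) hy), ?_⟩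
  have hYl : (1:ℝ) ≤ max YU (max Ys 1) := le_trans (le_max_right _ _) (le_max_right _ _)
  refine potter_sym g hK1 hYl hδ hεδ
    (fun y hy lam hlam => hUB y (le_trans (le_max_left _ _) hy) lam hlam)
    (fun w hw => ?_) hg_nonneg
  have hgw : 0 < g w := hYUpos w (le_trans (le_max_left _ _) hw)
  obtain ⟨h1, h2⟩ := hYs w (le_trans (le_max_left _ _) (le_trans (le_max_right _ _) hw))
  constructor
  · rw [div_lt_iff₀ hgw] at h1; linarith
  · rw [lt_div_iff₀ hgw] at h2
    have h3 : ((1:ℝ)+ε) * (((1:ℝ)+ε)⁻¹ * g w) ≤ (1+ε) * g (2*w) :=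
      mul_le_mul_of_nonneg_left h2.le (by linarith)
    rwa [← mul_assoc, mul_inv_cancel₀ (by linarith : (1:ℝ)+ε ≠ 0), one_mul] at h3

lemma potter_lratio (l g : ℝ → ℝ) (hl_meas : Measurable l) (hl_nonneg : ∀ x, 0 ≤ l x)
    (hg_meas : Measurable g) (hg_nonneg : ∀ x, 0 ≤ g x)
    (hg_slow : ∀ lam : ℝ, 0 < lam →
      Tendsto (fun y => g (lam * y) / g y) atTop (nhds 1))
    (hg_zero : Tendsto g atTop (nhds 0))
    (hl_rem : ∀ lam : ℝ, 1 < lam →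
      (fun y => l (lam * y) / l y - 1) =O[atTop] g)
    {δ : ℝ} (hδ : 0 < δ) :
    ∃ K : ℝ, 1 ≤ K ∧ ∃ Y : ℝ, 1 ≤ Y ∧ (∀ y, Y ≤ y → 0 < l y) ∧ (∀ y, Y ≤ y → 0 < g y) ∧
      ∀ y z, Y ≤ y → Y ≤ z → l z ≤ K * (max (z/y) (y/z)) ^ δ * l y := by
  obtain ⟨Kl, hKl1, YU, hYU1, hYUlpos, hYUgpos, hUBl⟩ := unif_bound_l l g hl_meas hl_nonneg
    hg_meas hg_nonneg hg_slow hg_zero hl_rem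
  set ε := (2:ℝ) ^ δ - 1 with hε
  have hεδ : (1:ℝ) + ε = (2:ℝ) ^ δ := by ring
  have hεpos : 0 < ε := by
    have : (1:ℝ) < (2:ℝ) ^ δ := Real.one_lt_rpow_iff_of_pos two_pos |>.2 (Or.inl ⟨one_lt_two, hδ⟩)
    linarith
  obtain ⟨c, hc⟩ := isBigO_iff.1 (hl_rem 2 one_lt_two)
  set c' := max c 1 with hc'
  have hc'pos : 0 < c' := lt_of_lt_of_le one_pos (le_max_right _ _)
  -- eventual smallness of g
  have hsmall : ∀ᶠ w in atTop, g w ≤ (min (ε/(1+ε)) (1/2)) / (max c' Kl) := by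
    have hpos : (0:ℝ) < (min (ε/(1+ε)) (1/2)) / (max c' Kl) := by
      apply div_pos (lt_min (by positivity) (by norm_num))
      exact lt_of_lt_of_le hc'pos (le_max_left _ _)
    exact hg_zero.eventually (eventually_le_nhds hpos)
  obtain ⟨Ys, hYs⟩ := eventually_atTop.1 (hsmall.and hc)
  set Y := max YU (max Ys 1) with hY
  have hY1 : (1:ℝ) ≤ Y := le_trans (le_max_right _ _) (le_max_right _ _)
  have hYU' : ∀ w, Y ≤ w → YU ≤ w := fun w hw => le_trans (le_max_left _ _) hw
  have hYs' : ∀ w, Y ≤ w → Ys ≤ w := fun w hw =>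
    le_trans (le_max_left _ _) (le_trans (le_max_right _ _) hw)
  have hgsm : ∀ w, Y ≤ w → c' * g w ≤ ε/(1+ε) ∧ c' * g w ≤ 1/2 ∧ Kl * g w ≤ ε/(1+ε) ∧
      Kl * g w ≤ 1/2 := by
    intro w hw
    have h1 := (hYs w (hYs' w hw)).1
    have hM : 0 < max c' Kl := lt_of_lt_of_le hc'pos (le_max_left _ _)
    have h2 : max c' Kl * g w ≤ min (ε/(1+ε)) (1/2) := by
      rw [mul_comm, ← le_div_iff₀ hM]; exact h1
    have h3 : c' * g w ≤ max c' Kl * g w :=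
      mul_le_mul_of_nonneg_right (le_max_left _ _) (hg_nonneg w)
    have h4 : Kl * g w ≤ max c' Kl * g w :=
      mul_le_mul_of_nonneg_right (le_max_right _ _) (hg_nonneg w)
    exact ⟨le_trans h3 (le_trans h2 (min_le_left _ _)),
      le_trans h3 (le_trans h2 (min_le_right _ _)),
      le_trans h4 (le_trans h2 (min_le_left _ _)),
      le_trans h4 (le_trans h2 (min_le_right _ _))⟩
  refine ⟨max 2 Kl, le_trans one_le_two (le_max_left _ _), Y, hY1,
    fun y hy => hYUlpos y (hYU' y hy), fun y hy => hYUgpos y (hYU' y hy), ?_⟩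
  refine potter_sym l (le_trans one_le_two (le_max_left _ _)) hY1 hδ hεδ
    (fun y hy lam hlam => ?_) (fun w hw => ?_) hl_nonneg
  · -- uniform bound with constant `max 2 Kl` from `unif_bound_l` and smallness of `g`
    have hly : 0 < l y := hYUlpos y (hYU' y hy)
    have hub := hUBl y (hYU' y hy) lam hlam
    obtain ⟨-, -, -, h4⟩ := hgsm y hy
    have hKg : Kl * (g y * l y) ≤ (1/2) * l y := by
      rw [← mul_assoc]
      exact mul_le_mul_of_nonneg_right h4 hly.le
    have hub1 : |l (lam * y) - l y| ≤ (1/2) * l y := le_trans hub hKg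
    rw [abs_le] at hub1
    constructor
    · calc l (lam * y) ≤ l y + (1/2) * l y := by linarith [hub1.2]
        _ ≤ max 2 Kl * l y := by
            have : (2:ℝ) ≤ max 2 Kl := le_max_left _ _
            nlinarith [hly]
    · calc l y ≤ 2 * l (lam * y) := by linarith [hub1.1]
        _ ≤ max 2 Kl * l (lam * y) :=
            mul_le_mul_of_nonneg_right (le_max_left _ _) (hl_nonneg _)
  · -- step bound from `hl_rem 2`
    have hlw : 0 < l w := hYUlpos w (hYU' w hw)
    have hc2 := (hYs w (hYs' w hw)).2
    obtain ⟨h1, h2, -, -⟩ := hgsm w hw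
    rw [Real.norm_eq_abs, Real.norm_eq_abs, abs_of_nonneg (hg_nonneg w)] at hc2
    have hc3 : |l (2 * w) / l w - 1| ≤ c' * g w := by
      calc |l (2 * w) / l w - 1| ≤ c * g w := hc2
        _ ≤ c' * g w := mul_le_mul_of_nonneg_right (le_max_left _ _) (hg_nonneg w)
    rw [abs_le] at hc3
    have hr1 : l (2 * w) / l w ≤ 1 + ε := by
      have : ε/(1+ε) ≤ ε := by
        rw [div_le_iff₀ (by linarith : (0:ℝ) < 1 + ε)]
        nlinarith
      linarith [hc3.2]
    have hr2 : (1:ℝ) - ε/(1+ε) ≤ l (2 * w) / l w := by linarith [hc3.1]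
    constructor
    · rw [div_le_iff₀ hlw] at hr1
      exact hr1
    · have h1ε : (0:ℝ) < 1 + ε := by linarith
      have hr3 : (1:ℝ)/(1+ε) ≤ l (2 * w) / l w := by
        have : (1:ℝ) - ε/(1+ε) = 1/(1+ε) := by field_simp; ring
        linarith [hr2]
      rw [div_le_div_iff₀ h1ε hlw] at hr3
      calc l w = 1 * l w := (one_mul _).symm
        _ ≤ l (2 * w) * (1 + ε) := hr3
        _ = (1 + ε) * l (2 * w) := by ring

lemma rpow_pow_comm {x : ℝ} (hx : 0 < x) (δ : ℝ) (n : ℕ) :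
    (x ^ δ) ^ n = (x ^ n) ^ δ := by
  rw [← Real.rpow_natCast (x ^ δ) n, ← Real.rpow_natCast x n,
    ← Real.rpow_mul hx.le, ← Real.rpow_mul hx.le, mul_comm]

lemma potter_l_rem (l g : ℝ → ℝ) (hl_meas : Measurable l) (hl_nonneg : ∀ x, 0 ≤ l x)
    (hg_meas : Measurable g) (hg_nonneg : ∀ x, 0 ≤ g x)
    (hg_slow : ∀ lam : ℝ, 0 < lam →
      Tendsto (fun y => g (lam * y) / g y) atTop (nhds 1))
    (hg_zero : Tendsto g atTop (nhds 0))
    (hl_rem : ∀ lam : ℝ, 1 < lam →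
      (fun y => l (lam * y) / l y - 1) =O[atTop] g)
    {δ : ℝ} (hδ : 0 < δ) :
    ∃ C : ℝ, 1 ≤ C ∧ ∃ Y : ℝ, 1 ≤ Y ∧ (∀ y, Y ≤ y → 0 < l y) ∧ (∀ y, Y ≤ y → 0 < g y) ∧
      ∀ y z, Y ≤ y → Y ≤ z →
        |l z - l y| ≤ C * (max (z/y) (y/z)) ^ (4*δ) * (g y * l y) := by
  obtain ⟨Kg, hKg1, Yg, hYg1, hYgpos, hPg⟩ := potter_g g hg_meas hg_nonneg hg_slow hδ
  obtain ⟨Kl, hKl1, Yl, hYl1, hYllpos, hYlgpos, hPl⟩ := potter_lratio l g hl_meas hl_nonneg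
    hg_meas hg_nonneg hg_slow hg_zero hl_rem hδ
  obtain ⟨Ku, hKu1, Yu, hYu1, hYulpos, hYugpos, hUBl⟩ := unif_bound_l l g hl_meas hl_nonneg
    hg_meas hg_nonneg hg_slow hg_zero hl_rem
  set Y := max (max Yg Yl) Yu with hYdef
  have hY1 : (1:ℝ) ≤ Y := le_trans hYu1 (le_max_right _ _)
  have hYg' : ∀ w, Y ≤ w → Yg ≤ w := fun w hw =>
    le_trans (le_trans (le_max_left _ _) (le_max_left _ _)) hw
  have hYl' : ∀ w, Y ≤ w → Yl ≤ w := fun w hw =>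
    le_trans (le_trans (le_max_right _ _) (le_max_left _ _)) hw
  have hYu' : ∀ w, Y ≤ w → Yu ≤ w := fun w hw => le_trans (le_max_right _ _) hw
  have hKgKl : (1:ℝ) ≤ Kg * Kl := by
    calc (1:ℝ) = 1*1 := by norm_num
      _ ≤ Kg * Kl := mul_le_mul hKg1 hKl1 one_pos.le (by linarith)
  have hK3 : (1:ℝ) ≤ Ku * Kg * Kl := by
    calc (1:ℝ) = 1*1 := by norm_num
      _ ≤ Ku * (Kg * Kl) := mul_le_mul hKu1 hKgKl one_pos.le (by linarith)
      _ = Ku * Kg * Kl := by ring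
  set B := (2:ℝ) ^ (2*δ) with hBdef
  have hB1 : (1:ℝ) < B :=
    Real.one_lt_rpow_iff_of_pos two_pos |>.2 (Or.inl ⟨one_lt_two, by linarith⟩)
  set C₃ := Ku * Kg * Kl / (B - 1) with hC₃
  have hC₃0 : 0 ≤ C₃ := by
    apply div_nonneg _ (by linarith)
    linarith
  -- comparison of `g`, `l` at `2^n * y` with values at `y`
  have hEn : ∀ (n : ℕ) (y : ℝ), Y ≤ y →
      g (2^n * y) ≤ Kg * ((2:ℝ)^n) ^ δ * g y ∧ l (2^n * y) ≤ Kl * ((2:ℝ)^n) ^ δ * l y := by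
    intro n y hy
    have hypos : 0 < y := lt_of_lt_of_le one_pos (le_trans hY1 hy)
    have hbase : Y ≤ 2^n * y := le_trans hy (le_mul_of_one_le_left hypos.le
      (one_le_pow₀ one_le_two))
    have hd1 : (2^n * y) / y = (2:ℝ)^n := by field_simp
    have hd2 : y / (2^n * y) = ((2:ℝ)^n)⁻¹ := by
      rw [eq_comm, inv_eq_iff_eq_inv, eq_comm, inv_div]; field_simp
    have hmax : max ((2^n * y)/y) (y/(2^n * y)) = (2:ℝ)^n := by
      rw [hd1, hd2]
      exact max_eq_left (le_trans (inv_le_one_of_one_le₀ (one_le_pow₀ one_le_two))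
        (one_le_pow₀ one_le_two))
    constructor
    · have := hPg y (2^n * y) (hYg' y hy) (hYg' _ hbase)
      rwa [hmax] at this
    · have := hPl y (2^n * y) (hYl' y hy) (hYl' _ hbase)
      rwa [hmax] at this
  have hBn : ∀ n : ℕ, (((2:ℝ)^n) ^ δ) * (((2:ℝ)^n) ^ δ) = B ^ n := by
    intro n
    have h2n : (0:ℝ) < 2^n := by positivity
    rw [← Real.rpow_add h2n, hBdef, rpow_pow_comm two_pos (2*δ) n]
    norm_num [two_mul]
  -- telescoping induction
  have IC : ∀ n : ℕ, ∀ y, Y ≤ y → |l (2^n * y) - l y| ≤ C₃ * B^n * (g y * l y) := by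
    intro n
    induction n with
    | zero =>
      intro y hy
      simp only [pow_zero, one_mul, sub_self, abs_zero]
      exact mul_nonneg (mul_nonneg hC₃0 (by norm_num))
        (mul_nonneg (hg_nonneg y) (hl_nonneg y))
    | succ n ih =>
      intro y hy
      have hypos : 0 < y := lt_of_lt_of_le one_pos (le_trans hY1 hy)
      have hbase : Y ≤ 2^n * y := le_trans hy (le_mul_of_one_le_left hypos.le
        (one_le_pow₀ one_le_two))
      have hstep : |l (2 * (2^n * y)) - l (2^n * y)| ≤ Ku * (g (2^n * y) * l (2^n * y)) :=
        hUBl _ (hYu' _ hbase) 2 ⟨one_le_two, le_refl _⟩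
      obtain ⟨hgE, hlE⟩ := hEn n y hy
      have hgl : g (2^n * y) * l (2^n * y) ≤ Kg * Kl * B^n * (g y * l y) := by
        calc g (2^n * y) * l (2^n * y)
            ≤ (Kg * ((2:ℝ)^n) ^ δ * g y) * (Kl * ((2:ℝ)^n) ^ δ * l y) :=
              mul_le_mul hgE hlE (hl_nonneg _) (mul_nonneg (mul_nonneg
                (by linarith) (by positivity)) (hg_nonneg y))
          _ = Kg * Kl * ((((2:ℝ)^n) ^ δ) * (((2:ℝ)^n) ^ δ)) * (g y * l y) := by ring
          _ = Kg * Kl * B^n * (g y * l y) := by rw [hBn n]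
      have hkey : C₃ * (B - 1) = Ku * Kg * Kl := by
        rw [hC₃, div_mul_cancel₀]; intro h; rw [sub_eq_zero] at h; exact absurd h.symm hB1.ne
      calc |l (2^(n+1) * y) - l y|
          ≤ |l (2^(n+1) * y) - l (2^n * y)| + |l (2^n * y) - l y| := abs_sub_le _ _ _
        _ = |l (2 * (2^n * y)) - l (2^n * y)| + |l (2^n * y) - l y| := by ring_nf
        _ ≤ Ku * (g (2^n * y) * l (2^n * y)) + C₃ * B^n * (g y * l y) :=
            add_le_add hstep (ih y hy)
        _ ≤ Ku * (Kg * Kl * B^n * (g y * l y)) + C₃ * B^n * (g y * l y) := by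
            refine add_le_add_left (mul_le_mul_of_nonneg_left hgl (by linarith)) _
        _ = (Ku * Kg * Kl + C₃) * B^n * (g y * l y) := by ring
        _ = C₃ * B^(n+1) * (g y * l y) := by rw [← hkey]; ring
  -- the final two-sided bound
  set C₄ := Ku * Kg * Kl + C₃ with hC₄
  have hC₄1 : 1 ≤ C₄ := by linarith
  -- one-sided version for y ≤ z
  have main : ∀ y z, Y ≤ y → Y ≤ z → y ≤ z →
      |l z - l y| ≤ C₄ * (z/y) ^ (2*δ) * (g y * l y) := by
    intro y z hy hz hyz
    have hypos : 0 < y := lt_of_lt_of_le one_pos (le_trans hY1 hy)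
    have hr : 1 ≤ z / y := (one_le_div hypos).2 hyz
    obtain ⟨n, μ, hμ1, hμ2, hreq, h2n⟩ := dyadic hr
    have hz' : z = μ * (2 ^ n * y) := by
      have : z = (z / y) * y := by field_simp
      rw [this, hreq]; ring
    have hbase : Y ≤ 2^n * y := le_trans hy (le_mul_of_one_le_left hypos.le
      (one_le_pow₀ one_le_two))
    obtain ⟨hgE, hlE⟩ := hEn n y hy
    have h1 : |l z - l (2^n * y)| ≤ Ku * (g (2^n * y) * l (2^n * y)) := by
      rw [hz']
      exact hUBl _ (hYu' _ hbase) μ ⟨hμ1, hμ2⟩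
    have hgl : g (2^n * y) * l (2^n * y) ≤ Kg * Kl * B^n * (g y * l y) := by
      calc g (2^n * y) * l (2^n * y)
          ≤ (Kg * ((2:ℝ)^n) ^ δ * g y) * (Kl * ((2:ℝ)^n) ^ δ * l y) :=
            mul_le_mul hgE hlE (hl_nonneg _) (mul_nonneg (mul_nonneg
              (by linarith) (by positivity)) (hg_nonneg y))
        _ = Kg * Kl * ((((2:ℝ)^n) ^ δ) * (((2:ℝ)^n) ^ δ)) * (g y * l y) := by ring
        _ = Kg * Kl * B^n * (g y * l y) := by rw [hBn n]
    have hBle : B^n ≤ (z/y) ^ (2*δ) := by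
      rw [hBdef, rpow_pow_comm two_pos (2*δ) n]
      exact Real.rpow_le_rpow (by positivity) h2n (by linarith)
    calc |l z - l y| ≤ |l z - l (2^n * y)| + |l (2^n * y) - l y| := abs_sub_le _ _ _
      _ ≤ Ku * (g (2^n * y) * l (2^n * y)) + C₃ * B^n * (g y * l y) :=
          add_le_add h1 (IC n y hy)
      _ ≤ Ku * (Kg * Kl * B^n * (g y * l y)) + C₃ * B^n * (g y * l y) :=
          add_le_add_left (mul_le_mul_of_nonneg_left hgl (by linarith)) _
      _ = C₄ * B^n * (g y * l y) := by ring
      _ ≤ C₄ * (z/y) ^ (2*δ) * (g y * l y) := by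
          refine mul_le_mul_of_nonneg_right (mul_le_mul_of_nonneg_left hBle (by linarith)) ?_
          exact mul_nonneg (hg_nonneg _) (hl_nonneg _)
  have hC5 : (1:ℝ) ≤ C₄ * Kg * Kl := by
    calc (1:ℝ) = 1*1 := by norm_num
      _ ≤ C₄ * (Kg * Kl) := mul_le_mul hC₄1 hKgKl one_pos.le (by linarith)
      _ = C₄ * Kg * Kl := by ring
  refine ⟨C₄ * Kg * Kl, hC5, Y, hY1,
    fun y hy => hYllpos y (hYl' y hy), fun y hy => hYgpos y (hYg' y hy), fun y z hy hz => ?_⟩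
  have hypos : 0 < y := lt_of_lt_of_le one_pos (le_trans hY1 hy)
  have hzpos : 0 < z := lt_of_lt_of_le one_pos (le_trans hY1 hz)
  rcases le_total y z with hyz | hzy
  · have hmax : max (z/y) (y/z) = z/y := by
      apply max_eq_left
      calc y/z ≤ 1 := by rw [div_le_one hzpos]; exact hyz
        _ ≤ z/y := (one_le_div hypos).2 hyz
    rw [hmax]
    have hr1 : (1:ℝ) ≤ z/y := (one_le_div hypos).2 hyz
    have hexp : (z/y) ^ (2*δ) ≤ (z/y) ^ (4*δ) :=
      Real.rpow_le_rpow_of_exponent_le hr1 (by linarith)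
    calc |l z - l y| ≤ C₄ * (z/y) ^ (2*δ) * (g y * l y) := main y z hy hz hyz
      _ ≤ C₄ * (z/y) ^ (4*δ) * (g y * l y) := by
          refine mul_le_mul_of_nonneg_right (mul_le_mul_of_nonneg_left hexp (by linarith)) ?_
          exact mul_nonneg (hg_nonneg _) (hl_nonneg _)
      _ ≤ C₄ * Kg * Kl * (z/y) ^ (4*δ) * (g y * l y) := by
          have h2 : (0:ℝ) ≤ (z/y) ^ (4*δ) * (g y * l y) :=
            mul_nonneg (by positivity) (mul_nonneg (hg_nonneg _) (hl_nonneg _))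
          have h3 : C₄ * ((z/y) ^ (4*δ) * (g y * l y)) ≤
              (C₄ * (Kg * Kl)) * ((z/y) ^ (4*δ) * (g y * l y)) := by
            refine mul_le_mul_of_nonneg_right ?_ h2
            nlinarith
          calc C₄ * (z/y) ^ (4*δ) * (g y * l y)
              = C₄ * ((z/y) ^ (4*δ) * (g y * l y)) := by ring
            _ ≤ (C₄ * (Kg * Kl)) * ((z/y) ^ (4*δ) * (g y * l y)) := h3
            _ = C₄ * Kg * Kl * (z/y) ^ (4*δ) * (g y * l y) := by ring
  · -- downward case
    have hmax : max (z/y) (y/z) = y/z := by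
      apply max_eq_right
      calc z/y ≤ 1 := by rw [div_le_one hypos]; exact hzy
        _ ≤ y/z := (one_le_div hzpos).2 hzy
    rw [hmax]
    have hr1 : (1:ℝ) ≤ y/z := (one_le_div hzpos).2 hzy
    have h1 : |l y - l z| ≤ C₄ * (y/z) ^ (2*δ) * (g z * l z) := main z y hz hy hzy
    -- Potter bounds to move `g z * l z` to `g y * l y`
    have hmax' : max (z/y) (y/z) = y/z := hmax
    have hgP : g z ≤ Kg * (y/z) ^ δ * g y := by
      have := hPg y z (hYg' y hy) (hYg' z hz)
      rwa [hmax'] at this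
    have hlP : l z ≤ Kl * (y/z) ^ δ * l y := by
      have := hPl y z (hYl' y hy) (hYl' z hz)
      rwa [hmax'] at this
    have hprod : g z * l z ≤ Kg * Kl * (y/z) ^ (2*δ) * (g y * l y) := by
      calc g z * l z ≤ (Kg * (y/z) ^ δ * g y) * (Kl * (y/z) ^ δ * l y) :=
            mul_le_mul hgP hlP (hl_nonneg _) (mul_nonneg (mul_nonneg
              (by linarith) (by positivity)) (hg_nonneg y))
        _ = Kg * Kl * ((y/z) ^ δ * (y/z) ^ δ) * (g y * l y) := by ring
        _ = Kg * Kl * (y/z) ^ (2*δ) * (g y * l y) := by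
            rw [← Real.rpow_add (by positivity : (0:ℝ) < y/z)]; norm_num [two_mul]
    have hrpw : (y/z) ^ (2*δ) * (y/z) ^ (2*δ) = (y/z) ^ (4*δ) := by
      rw [← Real.rpow_add (by positivity : (0:ℝ) < y/z)]; norm_num; ring_nf
    calc |l z - l y| = |l y - l z| := abs_sub_comm _ _
      _ ≤ C₄ * (y/z) ^ (2*δ) * (g z * l z) := h1
      _ ≤ C₄ * (y/z) ^ (2*δ) * (Kg * Kl * (y/z) ^ (2*δ) * (g y * l y)) := by
          refine mul_le_mul_of_nonneg_left hprod ?_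
          exact mul_nonneg (by linarith) (by positivity)
      _ = C₄ * Kg * Kl * ((y/z) ^ (2*δ) * (y/z) ^ (2*δ)) * (g y * l y) := by ring
      _ = C₄ * Kg * Kl * (y/z) ^ (4*δ) * (g y * l y) := by rw [hrpw]

lemma one_le_max_ratio {s y : ℝ} (hs : 0 < s) (hy : 0 < y) :
    1 ≤ max (s/y) (y/s) := by
  rcases le_total s y with hsy | hys
  · exact le_trans ((one_le_div hs).2 hsy) (le_max_right _ _)
  · exact le_trans ((one_le_div hy).2 hys) (le_max_left _ _)

lemma zygmund_potter (h : ℝ → ℝ) (hh_nonneg : ∀ x, 0 ≤ h x)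
    (hh_zyg : ∀ α : ℝ, 0 < α →
      (∃ x₁ : ℝ, 0 < x₁ ∧ MonotoneOn (fun y => y ^ α * h y) (Set.Ici x₁)) ∧
      (∃ x₁ : ℝ, 0 < x₁ ∧ AntitoneOn (fun y => y ^ (-α) * h y) (Set.Ici x₁)))
    {α : ℝ} (hα : 0 < α) :
    ∃ Y : ℝ, 1 ≤ Y ∧ ∀ y z, Y ≤ y → Y ≤ z →
      h z ≤ (max (z/y) (y/z)) ^ α * h y := by
  obtain ⟨⟨x₁, hx₁, hmono⟩, ⟨x₂, hx₂, hanti⟩⟩ := hh_zyg α hα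
  refine ⟨max (max x₁ x₂) 1, le_max_right _ _, fun y z hy hz => ?_⟩
  have hx₁y : x₁ ≤ y := le_trans (le_trans (le_max_left _ _) (le_max_left _ _)) hy
  have hx₁z : x₁ ≤ z := le_trans (le_trans (le_max_left _ _) (le_max_left _ _)) hz
  have hx₂y : x₂ ≤ y := le_trans (le_trans (le_max_right _ _) (le_max_left _ _)) hy
  have hx₂z : x₂ ≤ z := le_trans (le_trans (le_max_right _ _) (le_max_left _ _)) hz
  have hypos : 0 < y := lt_of_lt_of_le one_pos (le_trans (le_max_right _ _) hy)
  have hzpos : 0 < z := lt_of_lt_of_le one_pos (le_trans (le_max_right _ _) hz)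
  rcases le_total y z with hyz | hzy
  · have hmax : max (z/y) (y/z) = z/y := max_eq_left
      (le_trans (by rw [div_le_one hzpos]; exact hyz) ((one_le_div hypos).2 hyz))
    rw [hmax]
    have ha := hanti (mem_Ici.2 hx₂y) (mem_Ici.2 hx₂z) hyz
    simp only at ha
    -- z ^ (-α) * h z ≤ y ^ (-α) * h y
    have hcalc : h z = z ^ α * (z ^ (-α) * h z) := by
      rw [← mul_assoc, ← Real.rpow_add hzpos]
      simp
    rw [hcalc]
    calc z ^ α * (z ^ (-α) * h z) ≤ z ^ α * (y ^ (-α) * h y) :=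
          mul_le_mul_of_nonneg_left ha (by positivity)
      _ = (z ^ α * y ^ (-α)) * h y := by ring
      _ = (z/y) ^ α * h y := by
          rw [Real.div_rpow hzpos.le hypos.le, Real.rpow_neg hypos.le, div_eq_mul_inv]
  · have hmax : max (z/y) (y/z) = y/z := max_eq_right
      (le_trans (by rw [div_le_one hypos]; exact hzy) ((one_le_div hzpos).2 hzy))
    rw [hmax]
    have hm := hmono (mem_Ici.2 hx₁z) (mem_Ici.2 hx₁y) hzy
    simp only at hm
    -- z ^ α * h z ≤ y ^ α * h y
    have hcalc : h z = z ^ (-α) * (z ^ α * h z) := by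
      rw [← mul_assoc, ← Real.rpow_add hzpos]
      simp
    rw [hcalc]
    calc z ^ (-α) * (z ^ α * h z) ≤ z ^ (-α) * (y ^ α * h y) :=
          mul_le_mul_of_nonneg_left hm (by positivity)
      _ = (y ^ α * z ^ (-α)) * h y := by ring
      _ = (y/z) ^ α * h y := by
          rw [Real.div_rpow hypos.le hzpos.le, Real.rpow_neg hzpos.le, div_eq_mul_inv]

/-- Slowly varying functions eventually dominate negative powers. -/
lemma power_bound (l g : ℝ → ℝ) (hl_meas : Measurable l) (hl_nonneg : ∀ x, 0 ≤ l x)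
    (hg_meas : Measurable g) (hg_nonneg : ∀ x, 0 ≤ g x)
    (hg_slow : ∀ lam : ℝ, 0 < lam →
      Tendsto (fun y => g (lam * y) / g y) atTop (nhds 1))
    (hg_zero : Tendsto g atTop (nhds 0))
    (hl_rem : ∀ lam : ℝ, 1 < lam →
      (fun y => l (lam * y) / l y - 1) =O[atTop] g)
    {δ : ℝ} (hδ : 0 < δ) :
    ∃ C : ℝ, 1 ≤ C ∧ ∃ Y : ℝ, 1 ≤ Y ∧ ∀ y, Y ≤ y →
      y ^ (-δ) ≤ C * g y ∧ y ^ (-δ) ≤ C * l y := by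
  obtain ⟨Kg, hKg1, Yg, hYg1, hYgpos, hPg⟩ := potter_g g hg_meas hg_nonneg hg_slow hδ
  obtain ⟨Kl, hKl1, Yl, hYl1, hYllpos, hYlgpos, hPl⟩ := potter_lratio l g hl_meas hl_nonneg
    hg_meas hg_nonneg hg_slow hg_zero hl_rem hδ
  set Y := max Yg Yl with hYdef
  have hY1 : (1:ℝ) ≤ Y := le_trans hYg1 (le_max_left _ _)
  have hYpos : (0:ℝ) < Y := lt_of_lt_of_le one_pos hY1
  have hgY : 0 < g Y := hYgpos Y (le_max_left _ _)
  have hlY : 0 < l Y := hYllpos Y (le_max_right _ _)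
  -- generic: from `φ Y ≤ K (y/Y)^δ φ y` conclude `y^(-δ) ≤ C φ y`
  have generic : ∀ (φ : ℝ → ℝ) (K : ℝ), 1 ≤ K → 0 < φ Y → (∀ x, 0 ≤ φ x) →
      (∀ y, Y ≤ y → φ Y ≤ K * (y/Y) ^ δ * φ y) →
      ∀ y, Y ≤ y → y ^ (-δ) ≤ (K * Y ^ (-δ) / φ Y) * φ y := by
    intro φ K hK hφY hφnn hP y hy
    have hypos : 0 < y := lt_of_lt_of_le hYpos hy
    have hkey := hP y hy
    have hsplit : (y/Y) ^ δ = y ^ δ * Y ^ (-δ) := by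
      rw [Real.div_rpow hypos.le hYpos.le, Real.rpow_neg hYpos.le, div_eq_mul_inv]
    rw [hsplit] at hkey
    -- multiply by y^(-δ) > 0
    have h2 : y ^ (-δ) * φ Y ≤ y ^ (-δ) * (K * (y ^ δ * Y ^ (-δ)) * φ y) :=
      mul_le_mul_of_nonneg_left hkey (by positivity)
    have h3 : y ^ (-δ) * (K * (y ^ δ * Y ^ (-δ)) * φ y) =
        (K * Y ^ (-δ)) * φ y * (y ^ (-δ) * y ^ δ) := by ring
    rw [h3, ← Real.rpow_add hypos] at h2
    simp only [neg_add_cancel, Real.rpow_zero, mul_one] at h2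
    rw [div_mul_eq_mul_div, le_div_iff₀ hφY]
    calc y ^ (-δ) * φ Y ≤ K * Y ^ (-δ) * φ y := h2
      _ = K * Y ^ (-δ) * φ y := rfl
  have hmaxg : ∀ y, Y ≤ y → g Y ≤ Kg * (y/Y) ^ δ * g y := by
    intro y hy
    have := hPg y Y (le_trans (le_max_left _ _) hy) (le_max_left _ _)
    have hmax : max (Y/y) (y/Y) = y/Y := max_eq_right
      (le_trans (by rw [div_le_one (lt_of_lt_of_le hYpos hy)]; exact hy)
        ((one_le_div hYpos).2 hy))
    rwa [hmax] at this
  have hmaxl : ∀ y, Y ≤ y → l Y ≤ Kl * (y/Y) ^ δ * l y := by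
    intro y hy
    have := hPl y Y (le_trans (le_max_right _ _) hy) (le_max_right _ _)
    have hmax : max (Y/y) (y/Y) = y/Y := max_eq_right
      (le_trans (by rw [div_le_one (lt_of_lt_of_le hYpos hy)]; exact hy)
        ((one_le_div hYpos).2 hy))
    rwa [hmax] at this
  set Cg := Kg * Y ^ (-δ) / g Y
  set Cl := Kl * Y ^ (-δ) / l Y
  refine ⟨max 1 (max Cg Cl), le_max_left _ _, Y, hY1, fun y hy => ?_⟩
  have h1 := generic g Kg hKg1 hgY hg_nonneg hmaxg y hy
  have h2 := generic l Kl hKl1 hlY hl_nonneg hmaxl y hy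
  constructor
  · calc y ^ (-δ) ≤ Cg * g y := h1
      _ ≤ max 1 (max Cg Cl) * g y := mul_le_mul_of_nonneg_right
          (le_trans (le_max_left _ _) (le_max_right _ _)) (hg_nonneg y)
  · calc y ^ (-δ) ≤ Cl * l y := h2
      _ ≤ max 1 (max Cg Cl) * l y := mul_le_mul_of_nonneg_right
          (le_trans (le_max_right _ _) (le_max_right _ _)) (hl_nonneg y)

/-- The master pointwise estimate comparing `f(1/s)` with `s^{-ρ} l(y)`. -/
lemma master_estimate (f l g h : ℝ → ℝ) (ρ : ℝ)
    (hl_meas : Measurable l) (hl_nonneg : ∀ x, 0 ≤ l x)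
    (hg_meas : Measurable g) (hg_nonneg : ∀ x, 0 ≤ g x)
    (hh_nonneg : ∀ x, 0 ≤ h x)
    (hg_slow : ∀ lam : ℝ, 0 < lam →
      Tendsto (fun y => g (lam * y) / g y) atTop (nhds 1))
    (hg_zero : Tendsto g atTop (nhds 0))
    (hl_rem : ∀ lam : ℝ, 1 < lam →
      (fun y => l (lam * y) / l y - 1) =O[atTop] g)
    (hh_zyg : ∀ α : ℝ, 0 < α →
      (∃ x₁ : ℝ, 0 < x₁ ∧ MonotoneOn (fun y => y ^ α * h y) (Set.Ici x₁)) ∧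
      (∃ x₁ : ℝ, 0 < x₁ ∧ AntitoneOn (fun y => y ^ (-α) * h y) (Set.Ici x₁)))
    (hf_asymp : (fun y => f y⁻¹ - y ^ (-ρ) * l y) =O[atTop]
      (fun y => y ^ (-ρ) * l y * h y))
    {η : ℝ} (hη : 0 < η) :
    ∃ C : ℝ, 1 ≤ C ∧ ∃ Y : ℝ, 1 ≤ Y ∧ (∀ y, Y ≤ y → 0 < l y) ∧ (∀ y, Y ≤ y → 0 < g y) ∧
      ∀ s y, Y ≤ s → Y ≤ y →
      |f s⁻¹ - s ^ (-ρ) * l y| ≤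
        C * (s ^ (-ρ) * (l y * ((g y + h y) * (max (s/y) (y/s)) ^ η))) := by
  have hη4 : 0 < η/4 := by linarith
  obtain ⟨Kl, hKl1, Yl, hYl1, hYllpos, hYlgpos, hPl⟩ := potter_lratio l g hl_meas hl_nonneg
    hg_meas hg_nonneg hg_slow hg_zero hl_rem hη4
  obtain ⟨Cr, hCr1, Yr, hYr1, hYrlpos, hYrgpos, hPr⟩ := potter_l_rem l g hl_meas hl_nonneg
    hg_meas hg_nonneg hg_slow hg_zero hl_rem hη4
  obtain ⟨Yh, hYh1, hPh⟩ := zygmund_potter h hh_nonneg hh_zyg hη4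
  obtain ⟨cf, hcf⟩ := isBigO_iff.1 hf_asymp
  obtain ⟨Yf, hYf⟩ := eventually_atTop.1 hcf
  set cf' := max cf 1 with hcf'
  have hcf'1 : (1:ℝ) ≤ cf' := le_max_right _ _
  set Y := max (max Yl Yr) (max Yh (max Yf 1)) with hYdef
  have hY1 : (1:ℝ) ≤ Y := le_trans (le_max_right _ _)
    (le_trans (le_max_right _ _) (le_max_right _ _))
  have hYl' : ∀ w:ℝ, Y ≤ w → Yl ≤ w := fun w hw =>
    le_trans (le_trans (le_max_left _ _) (le_max_left _ _)) hw
  have hYr' : ∀ w:ℝ, Y ≤ w → Yr ≤ w := fun w hw =>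
    le_trans (le_trans (le_max_right _ _) (le_max_left _ _)) hw
  have hYh' : ∀ w:ℝ, Y ≤ w → Yh ≤ w := fun w hw =>
    le_trans (le_trans (le_max_left _ _) (le_max_right _ _)) hw
  have hYf' : ∀ w:ℝ, Y ≤ w → Yf ≤ w := fun w hw =>
    le_trans (le_trans (le_trans (le_max_left _ _) (le_max_right _ _)) (le_max_right _ _)) hw
  have hCC : (1:ℝ) ≤ cf' * Kl + Cr := by
    have h1 : (1:ℝ)*1 ≤ cf' * Kl := mul_le_mul hcf'1 hKl1 one_pos.le
      (le_trans one_pos.le hcf'1)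
    linarith
  refine ⟨cf' * Kl + Cr, hCC, Y, hY1,
    fun y hy => hYllpos y (hYl' y hy), fun y hy => hYlgpos y (hYl' y hy), fun s y hs hy => ?_⟩
  have hspos : 0 < s := lt_of_lt_of_le one_pos (le_trans hY1 hs)
  have hypos : 0 < y := lt_of_lt_of_le one_pos (le_trans hY1 hy)
  set Q := max (s/y) (y/s) with hQ
  have hQ1 : 1 ≤ Q := one_le_max_ratio hspos hypos
  -- term 1 : |f s⁻¹ - s^{-ρ} l s| ≤ cf' s^{-ρ} l s h s
  have ht1 : |f s⁻¹ - s ^ (-ρ) * l s| ≤ cf' * (s ^ (-ρ) * l s * h s) := by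
    have := hYf s (hYf' s hs)
    rw [Real.norm_eq_abs, Real.norm_eq_abs] at this
    have habs : |s ^ (-ρ) * l s * h s| = s ^ (-ρ) * l s * h s := by
      rw [abs_of_nonneg]
      exact mul_nonneg (mul_nonneg (by positivity) (hl_nonneg s)) (hh_nonneg s)
    rw [habs] at this
    calc |f s⁻¹ - s ^ (-ρ) * l s| ≤ cf * (s ^ (-ρ) * l s * h s) := this
      _ ≤ cf' * (s ^ (-ρ) * l s * h s) := mul_le_mul_of_nonneg_right (le_max_left _ _)
          (mul_nonneg (mul_nonneg (by positivity) (hl_nonneg s)) (hh_nonneg s))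
  -- Potter bounds
  have hls : l s ≤ Kl * Q ^ (η/4) * l y := hPl y s (hYl' y hy) (hYl' s hs)
  have hhs : h s ≤ Q ^ (η/4) * h y := hPh y s (hYh' y hy) (hYh' s hs)
  have hlr : |l s - l y| ≤ Cr * Q ^ (4*(η/4)) * (g y * l y) := hPr y s (hYr' y hy) (hYr' s hs)
  rw [show 4*(η/4) = η by ring] at hlr
  have hQQ : Q ^ (η/4) * Q ^ (η/4) ≤ Q ^ η := by
    rw [← Real.rpow_add (lt_of_lt_of_le one_pos hQ1)]
    exact Real.rpow_le_rpow_of_exponent_le hQ1 (by linarith)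
  -- combine
  calc |f s⁻¹ - s ^ (-ρ) * l y|
      ≤ |f s⁻¹ - s ^ (-ρ) * l s| + |s ^ (-ρ) * l s - s ^ (-ρ) * l y| := by
        have := abs_sub_le (f s⁻¹) (s ^ (-ρ) * l s) (s ^ (-ρ) * l y)
        linarith
    _ ≤ cf' * (s ^ (-ρ) * l s * h s) + s ^ (-ρ) * |l s - l y| := by
        refine add_le_add ht1 ?_
        rw [← mul_sub, abs_mul, abs_of_nonneg (by positivity : (0:ℝ) ≤ s ^ (-ρ))]
    _ ≤ cf' * (s ^ (-ρ) * ((Kl * Q ^ (η/4) * l y) * (Q ^ (η/4) * h y))) +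
        s ^ (-ρ) * (Cr * Q ^ η * (g y * l y)) := by
        refine add_le_add ?_ (mul_le_mul_of_nonneg_left hlr (by positivity))
        refine mul_le_mul_of_nonneg_left ?_ (by linarith)
        rw [mul_assoc]
        refine mul_le_mul_of_nonneg_left ?_ (by positivity)
        exact mul_le_mul hls hhs (hh_nonneg s) (mul_nonneg (mul_nonneg (by linarith)
          (by positivity)) (hl_nonneg y))
    _ = cf' * Kl * (Q ^ (η/4) * Q ^ (η/4)) * (s ^ (-ρ) * (l y * h y)) +
        Cr * Q ^ η * (s ^ (-ρ) * (l y * g y)) := by ring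
    _ ≤ cf' * Kl * Q ^ η * (s ^ (-ρ) * (l y * h y)) +
        Cr * Q ^ η * (s ^ (-ρ) * (l y * g y)) := by
        refine add_le_add_left (mul_le_mul_of_nonneg_right
          (mul_le_mul_of_nonneg_left hQQ (by positivity)) ?_) _
        exact mul_nonneg (by positivity) (mul_nonneg (hl_nonneg y) (hh_nonneg y))
    _ ≤ (cf' * Kl + Cr) * (s ^ (-ρ) * (l y * ((g y + h y) * Q ^ η))) := by
        have e1 : cf' * Kl * Q ^ η * (s ^ (-ρ) * (l y * h y)) +
            Cr * Q ^ η * (s ^ (-ρ) * (l y * g y)) =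
            (cf' * Kl * h y + Cr * g y) * (Q ^ η * (s ^ (-ρ) * l y)) := by ring
        have e2 : (cf' * Kl + Cr) * (s ^ (-ρ) * (l y * ((g y + h y) * Q ^ η))) =
            ((cf' * Kl + Cr) * (g y + h y)) * (Q ^ η * (s ^ (-ρ) * l y)) := by ring
        rw [e1, e2]
        refine mul_le_mul_of_nonneg_right ?_
          (mul_nonneg (by positivity) (mul_nonneg (by positivity) (hl_nonneg y)))
        have hc1 : (0:ℝ) ≤ cf' * Kl := by positivity
        nlinarith [hg_nonneg y, hh_nonneg y, hCr1, hc1]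

section Subst

lemma hasDeriv_inv_scaled {x d : ℝ} (hx : 0 < x) (hd : 0 ≤ d) :
    ∀ t ∈ Ioi d, HasDerivWithinAt (fun t : ℝ => x / t) (-(x / t^2)) (Ioi d) t := by
  intro t ht
  have ht0 : 0 < t := lt_of_le_of_lt hd ht
  have h := (hasDerivAt_inv ht0.ne').const_mul x
  have heq : x * -(t^2)⁻¹ = -(x/t^2) := by field_simp
  rw [heq] at h
  exact (h.congr_of_eventuallyEq (Eventually.of_forall fun y => by
    rw [div_eq_mul_inv])).hasDerivWithinAt

lemma injOn_inv_scaled {x d : ℝ} (hx : 0 < x) (hd : 0 ≤ d) :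
    InjOn (fun t : ℝ => x / t) (Ioi d) := by
  intro t1 h1 t2 h2 he
  have ht1 : 0 < t1 := lt_of_le_of_lt hd h1
  have ht2 : 0 < t2 := lt_of_le_of_lt hd h2
  simp only at he
  rw [div_eq_div_iff ht1.ne' ht2.ne'] at he
  exact mul_left_cancel₀ hx.ne' (by linarith)

lemma subst_inv_integral (x d : ℝ) (hx : 0 < x) (hd : 0 ≤ d) (φ : ℝ → ℝ) :
    ∫ u in (fun t : ℝ => x/t) '' (Ioi d), φ u = ∫ t in Ioi d, (x/t^2) * φ (x/t) := by
  rw [integral_image_eq_integral_abs_deriv_smul measurableSet_Ioi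
    (hasDeriv_inv_scaled hx hd) (injOn_inv_scaled hx hd) φ]
  refine setIntegral_congr_fun measurableSet_Ioi (fun t ht => ?_)
  have ht0 : 0 < t := lt_of_le_of_lt hd ht
  rw [abs_neg, abs_of_pos (by positivity : (0:ℝ) < x/t^2), smul_eq_mul]

lemma subst_inv_integrableOn (x d : ℝ) (hx : 0 < x) (hd : 0 ≤ d) (φ : ℝ → ℝ) :
    IntegrableOn φ ((fun t : ℝ => x/t) '' (Ioi d)) ↔
      IntegrableOn (fun t => (x/t^2) * φ (x/t)) (Ioi d) := by
  rw [integrableOn_image_iff_integrableOn_abs_deriv_smul measurableSet_Ioi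
    (hasDeriv_inv_scaled hx hd) (injOn_inv_scaled hx hd) φ]
  refine integrableOn_congr_fun (fun t ht => ?_) measurableSet_Ioi
  have ht0 : 0 < t := lt_of_le_of_lt hd ht
  rw [abs_neg, abs_of_pos (by positivity : (0:ℝ) < x/t^2), smul_eq_mul]

lemma image_inv_Ioi_zero {x : ℝ} (hx : 0 < x) :
    (fun t : ℝ => x/t) '' (Ioi 0) = Ioi 0 := by
  ext u
  constructor
  · rintro ⟨t, ht, rfl⟩
    exact div_pos hx ht
  · intro hu
    exact ⟨x/u, div_pos hx hu, by field_simp⟩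

lemma image_inv_Ioi_pos {x d : ℝ} (hx : 0 < x) (hd : 0 < d) :
    (fun t : ℝ => x/t) '' (Ioi d) = Ioo 0 (x/d) := by
  ext u
  constructor
  · rintro ⟨t, ht, rfl⟩
    have ht0 : 0 < t := lt_trans hd ht
    exact ⟨div_pos hx ht0, by
      rw [div_lt_div_iff₀ ht0 hd]
      exact (mul_lt_mul_iff_right₀ hx).2 ht⟩
  · rintro ⟨hu0, hud⟩
    refine ⟨x/u, ?_, by field_simp⟩
    rw [mem_Ioi, lt_div_iff₀ hu0]
    rw [lt_div_iff₀ hd] at hud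
    nlinarith
  
lemma pointwise_subst {x ν : ℝ} (hx : 0 < x) (U : ℝ → ℝ) :
    ∀ t ∈ Ioi (0:ℝ), (x/t^2) * ((x/t) ^ (-ν) * U (x/t) / (x/t)) =
      x ^ (-ν) * (U (x/t) * t^ν / t) := by
  intro t ht
  have ht0 : 0 < t := ht
  have hxt : (0:ℝ) < x/t := div_pos hx ht0
  have h1 : (x/t) ^ (-ν) = x ^ (-ν) * (t ^ (-ν))⁻¹ := by
    rw [Real.div_rpow hx.le ht0.le, div_eq_mul_inv]
  have h2 : (t ^ (-ν))⁻¹ = t ^ ν := by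
    rw [Real.rpow_neg ht0.le, inv_inv]
  rw [h1, h2]
  have hxν : (0:ℝ) < x ^ (-ν) := Real.rpow_pos_of_pos hx _
  field_simp

/-- The main substitution: `∫_{t>d} U(x/t) t^ν dt/t = x^ν ∫_{image} u^{-ν} U(u) du/u`. -/
lemma mellin_subst (U : ℝ → ℝ) {x ν d : ℝ} (hx : 0 < x) (hd : 0 ≤ d) :
    ∫ u in (fun t : ℝ => x/t) '' (Ioi d), u ^ (-ν) * U u / u =
      x ^ (-ν) * ∫ t in Ioi d, U (x/t) * t^ν / t := by
  rw [subst_inv_integral x d hx hd _]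
  rw [← integral_const_mul]
  refine setIntegral_congr_fun measurableSet_Ioi (fun t ht => ?_)
  have ht' : t ∈ Ioi (0:ℝ) := lt_of_le_of_lt hd ht
  exact pointwise_subst hx U t ht'

lemma mellin_subst_integrable (U : ℝ → ℝ) {x ν d : ℝ} (hx : 0 < x) (hd : 0 ≤ d) :
    IntegrableOn (fun u => u ^ (-ν) * U u / u) ((fun t : ℝ => x/t) '' (Ioi d)) ↔
      IntegrableOn (fun t => U (x/t) * t^ν / t) (Ioi d) := by
  rw [subst_inv_integrableOn x d hx hd _]
  have hcong : ∀ t ∈ Ioi d, (x/t^2) * ((x/t) ^ (-ν) * U (x/t) / (x/t)) =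
      x ^ (-ν) * (U (x/t) * t^ν / t) := fun t ht =>
    pointwise_subst hx U t (lt_of_le_of_lt hd ht)
  rw [integrableOn_congr_fun hcong measurableSet_Ioi]
  have hne : x ^ (-ν) ≠ 0 := (Real.rpow_pos_of_pos hx _).ne'
  constructor
  · intro h
    have h2 := h.const_mul (x ^ (-ν))⁻¹
    have heq : (fun t => (x ^ (-ν))⁻¹ * (x ^ (-ν) * (U (x/t) * t^ν / t))) =
        fun t => U (x/t) * t^ν / t := funext fun t => by field_simp
    rwa [heq] at h2
  · intro h
    exact h.const_mul _

end Subst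

end AuxiliaryLemmas


/-- The Mellin convolution of two measurable functions on `(0,∞)`:
`f ⋆_M g (x) = ∫_0^∞ f(x/t) g(t) dt/t`. -/
noncomputable def mellinConv (f g : ℝ → ℝ) (x : ℝ) : ℝ :=
  ∫ t in Set.Ioi (0:ℝ), f (x / t) * g t / t

/-- The Mellin transform of a function on `(0,∞)` at a real point `s`:
`MU(s) = ∫_0^∞ t^{−s} U(t) dt/t`. -/
noncomputable def mellinT (U : ℝ → ℝ) (s : ℝ) : ℝ :=
  ∫ t in Set.Ioi (0:ℝ), t ^ (-s) * U t / t

/-- generalization of Arandelović's theorem with an error estimate,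
behavior near zero.  If the Mellin transform of a nonnegative measurable `U`
converges absolutely in the strip `σ ≤ Re z ≤ τ`,
`f(1/y) = y^{−ρ} l(y)(1 + O(h(y)))` as `y → ∞` with `ρ ∈ (σ,τ)`, `l` slowly varying
with remainder `g`, `g` slowly varying, `h` in the Zygmund class, `g, h → 0`,
`g`, `1/l`, `1/g` locally bounded on `(x₀,∞)`, and `y ↦ y^τ f(1/y)` bounded on every
`(0,a]`, then `U ⋆_M f(x) = MU(ρ) x^ρ l(1/x)(1 + O(g(1/x)) + O(h(1/x)))` as `x → 0`. -/
theorem mellin_convolution_asymptotics_at_zero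
    (U f l g h : ℝ → ℝ) (σ τ ρ x₀ : ℝ)
    (hστ : σ < τ) (hρ : ρ ∈ Set.Ioo σ τ) (hx₀ : 0 < x₀)
    (hU_meas : Measurable U) (hU_nonneg : ∀ x, 0 ≤ U x)
    (hf_meas : Measurable f)
    (hl_meas : Measurable l) (hl_nonneg : ∀ x, 0 ≤ l x)
    (hg_meas : Measurable g) (hg_nonneg : ∀ x, 0 ≤ g x)
    (hh_meas : Measurable h) (hh_nonneg : ∀ x, 0 ≤ h x)
    -- absolute convergence of the Mellin transform of `U` in the strip `σ ≤ Re z ≤ τ`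
    (hMellin : ∀ s ∈ Set.Icc σ τ,
      MeasureTheory.IntegrableOn (fun t => t ^ (-s) * U t / t) (Set.Ioi 0))
    -- `g` is slowly varying and `g(y) → 0`
    (hg_slow : ∀ lam : ℝ, 0 < lam →
      Tendsto (fun y => g (lam * y) / g y) atTop (nhds 1))
    (hg_zero : Tendsto g atTop (nhds 0))
    -- `l` is slowly varying with remainder `g`
    (hl_rem : ∀ lam : ℝ, 1 < lam →
      (fun y => l (lam * y) / l y - 1) =O[atTop] g)
    -- `h` belongs to the Zygmund class and `h(y) → 0`
    (hh_zyg : ∀ α : ℝ, 0 < α →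
      (∃ x₁ : ℝ, 0 < x₁ ∧ MonotoneOn (fun y => y ^ α * h y) (Set.Ici x₁)) ∧
      (∃ x₁ : ℝ, 0 < x₁ ∧ AntitoneOn (fun y => y ^ (-α) * h y) (Set.Ici x₁)))
    (hh_zero : Tendsto h atTop (nhds 0))
    -- condition (1): `f(1/y) = y^{−ρ} l(y)(1 + O(h(y)))` as `y → ∞`
    (hf_asymp : (fun y => f y⁻¹ - y ^ (-ρ) * l y) =O[atTop]
      (fun y => y ^ (-ρ) * l y * h y))
    -- condition (2): `g`, `1/l`, `1/g` are locally bounded on `(x₀,∞)`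
    (hloc : ∀ K : Set ℝ, IsCompact K → K ⊆ Set.Ioi x₀ →
      ∃ M : ℝ, ∀ y ∈ K, g y ≤ M ∧ (l y)⁻¹ ≤ M ∧ (g y)⁻¹ ≤ M)
    -- condition (3): `y ↦ y^τ f(1/y)` is bounded on every `(0,a]`
    (hf_bdd : ∀ a : ℝ, 0 < a → ∃ M : ℝ, ∀ y ∈ Set.Ioc (0:ℝ) a, |y ^ τ * f y⁻¹| ≤ M) :
    (fun x => mellinConv U f x - mellinT U ρ * (x ^ ρ * l x⁻¹))
      =O[nhdsWithin 0 (Set.Ioi 0)]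
      (fun x => x ^ ρ * l x⁻¹ * (g x⁻¹ + h x⁻¹)) := by
  obtain ⟨hσρ, hρτ⟩ := hρ
  set η := min (τ - ρ) (ρ - σ) / 2 with hηdef
  have hη : 0 < η := by
    have h1 : 0 < τ - ρ := by linarith
    have h2 : 0 < ρ - σ := by linarith
    have h3 := lt_min h1 h2
    rw [hηdef]
    linarith
  have hρη₁ : σ ≤ ρ - η := by
    have h3 := min_le_right (τ - ρ) (ρ - σ)
    rw [hηdef]
    linarith
  have hρη₂ : ρ + η ≤ τ := by
    have h3 := min_le_left (τ - ρ) (ρ - σ)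
    rw [hηdef]
    linarith
  obtain ⟨CM, hCM1, Y₁, hY₁1, hY₁lpos, hY₁gpos, hM⟩ := master_estimate f l g h ρ
    hl_meas hl_nonneg hg_meas hg_nonneg hh_nonneg hg_slow hg_zero hl_rem hh_zyg hf_asymp hη
  have hδpow : (0:ℝ) < (τ - ρ)/2 := by linarith
  obtain ⟨CP, hCP1, Y₂, hY₂1, hPow⟩ := power_bound l g hl_meas hl_nonneg hg_meas hg_nonneg
    hg_slow hg_zero hl_rem hδpow
  set Yb := max Y₁ Y₂ with hYbdef
  have hYb1 : (1:ℝ) ≤ Yb := le_trans hY₁1 (le_max_left _ _)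
  have hYbpos : (0:ℝ) < Yb := lt_of_lt_of_le one_pos hYb1
  obtain ⟨Mf, hMf⟩ := hf_bdd Yb hYbpos
  have hMf0 : 0 ≤ Mf := le_trans (abs_nonneg _) (hMf Yb ⟨hYbpos, le_refl _⟩)
  set I : ℝ → ℝ := fun ν => ∫ u in Ioi (0:ℝ), u ^ (-ν) * U u / u with hIdef
  have hIint : ∀ ν, σ ≤ ν → ν ≤ τ → IntegrableOn (fun u => u ^ (-ν) * U u / u) (Ioi 0) :=
    fun ν h1 h2 => hMellin ν ⟨h1, h2⟩
  have hInn : ∀ ν, 0 ≤ I ν := by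
    intro ν
    refine setIntegral_nonneg measurableSet_Ioi (fun u hu => ?_)
    have hu0 : 0 < u := hu
    exact div_nonneg (mul_nonneg (by positivity) (hU_nonneg u)) hu0.le
  set Cfin := CM * (I (ρ-η) + I (ρ+η)) + Mf * I τ * (CP * CP) + Yb ^ (τ-ρ) * I τ * CP
    with hCfin
  rw [isBigO_iff]
  refine ⟨Cfin, ?_⟩
  have hYbinv : (0:ℝ) < Yb⁻¹ := by positivity
  have hev : ∀ᶠ x in nhdsWithin 0 (Set.Ioi 0), x ∈ Set.Ioi (0:ℝ) ∧ x < Yb⁻¹ :=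
    eventually_mem_nhdsWithin.and
      (Filter.Eventually.filter_mono nhdsWithin_le_nhds (eventually_lt_nhds hYbinv))
  filter_upwards [hev] with x hx
  obtain ⟨hx0, hxYb⟩ := hx
  have hxpos : (0:ℝ) < x := hx0
  set y := x⁻¹ with hydef
  have hypos : 0 < y := by positivity
  have hyYb : Yb ≤ y := by
    rw [hydef, ← inv_inv Yb]
    exact le_of_lt (by
      apply inv_strictAnti₀ hxpos hxYb)
  have hyY₁ : Y₁ ≤ y := le_trans (le_max_left _ _) hyYb
  have hyY₂ : Y₂ ≤ y := le_trans (le_max_right _ _) hyYb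
  have hy1 : (1:ℝ) ≤ y := le_trans hYb1 hyYb
  -- the kernel functions
  set J : ℝ → ℝ → ℝ := fun ν t => U (x/t) * t ^ ν / t with hJdef
  have hJeq : ∀ ν : ℝ, ∫ t in Ioi (0:ℝ), J ν t = x ^ ν * I ν := by
    intro ν
    have h1 := mellin_subst U (ν := ν) hxpos (le_refl (0:ℝ))
    rw [image_inv_Ioi_zero hxpos] at h1
    -- h1 : I ν = x^{-ν} * ∫ J ν
    rw [hIdef]
    simp only
    rw [h1, ← mul_assoc, ← Real.rpow_add hxpos, add_neg_cancel, Real.rpow_zero, one_mul]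
  have hJint : ∀ ν : ℝ, σ ≤ ν → ν ≤ τ → IntegrableOn (J ν) (Ioi 0) := by
    intro ν h1 h2
    have := (mellin_subst_integrable U (ν := ν) hxpos (le_refl (0:ℝ)))
    rw [image_inv_Ioi_zero hxpos] at this
    exact this.1 (hIint ν h1 h2)
  have hJnn : ∀ (ν : ℝ) (t : ℝ), t ∈ Ioi (0:ℝ) → 0 ≤ J ν t := by
    intro ν t ht
    have ht0 : 0 < t := ht
    have := hU_nonneg (x/t)
    rw [hJdef]
    positivity
  -- region version at d = Yb⁻¹
  have hJreg : ∀ ν : ℝ, ∫ t in Ioi Yb⁻¹, J ν t =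
      x ^ ν * ∫ u in Ioo (0:ℝ) (x * Yb), u ^ (-ν) * U u / u := by
    intro ν
    have h1 := mellin_subst U (ν := ν) hxpos hYbinv.le
    rw [image_inv_Ioi_pos hxpos hYbinv, show x / Yb⁻¹ = x * Yb by field_simp] at h1
    rw [h1, ← mul_assoc, ← Real.rpow_add hxpos, add_neg_cancel, Real.rpow_zero, one_mul]
  -- tail bounds
  have htail_nonneg : ∀ ν : ℝ, 0 ≤ ∫ u in Ioo (0:ℝ) (x * Yb), u ^ (-ν) * U u / u := by
    intro ν
    refine setIntegral_nonneg measurableSet_Ioo (fun u hu => ?_)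
    have hu0 : 0 < u := hu.1
    exact div_nonneg (mul_nonneg (by positivity) (hU_nonneg u)) hu0.le
  have htail_τ : ∫ u in Ioo (0:ℝ) (x * Yb), u ^ (-τ) * U u / u ≤ I τ := by
    refine setIntegral_mono_set (hIint τ (le_of_lt hστ) (le_refl τ)) ?_ ?_
    · refine (ae_restrict_iff' measurableSet_Ioi).2 (Eventually.of_forall fun u hu => ?_)
      have hu0 : 0 < u := hu
      exact div_nonneg (mul_nonneg (by positivity) (hU_nonneg u)) hu0.le
    · exact HasSubset.Subset.eventuallyLE (fun u hu => hu.1)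
  have htail_ρ : ∫ u in Ioo (0:ℝ) (x * Yb), u ^ (-ρ) * U u / u ≤
      (x * Yb) ^ (τ - ρ) * I τ := by
    have hstep1 : ∫ u in Ioo (0:ℝ) (x * Yb), u ^ (-ρ) * U u / u ≤
        ∫ u in Ioo (0:ℝ) (x * Yb), (x * Yb) ^ (τ - ρ) * (u ^ (-τ) * U u / u) := by
      refine setIntegral_mono_on ((hIint ρ (le_of_lt hσρ) (le_of_lt hρτ)).mono_set
        (fun u hu => hu.1)) (((hIint τ (le_of_lt hστ) (le_refl τ)).mono_set
        (fun u (hu : u ∈ Ioo (0:ℝ) (x*Yb)) => hu.1)).const_mul _) measurableSet_Ioo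
        (fun u hu => ?_)
      have hu0 : 0 < u := hu.1
      have hu1 : u ≤ x * Yb := hu.2.le
      have hexp : u ^ (-ρ) = u ^ (τ - ρ) * u ^ (-τ) := by
        rw [← Real.rpow_add hu0]; ring_nf
      have hcmp : u ^ (τ - ρ) ≤ (x * Yb) ^ (τ - ρ) :=
        Real.rpow_le_rpow hu0.le hu1 (by linarith)
      calc u ^ (-ρ) * U u / u = u ^ (τ - ρ) * (u ^ (-τ) * U u / u) := by
            rw [hexp]; ring
        _ ≤ (x * Yb) ^ (τ - ρ) * (u ^ (-τ) * U u / u) := by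
            refine mul_le_mul_of_nonneg_right hcmp ?_
            exact div_nonneg (mul_nonneg (by positivity) (hU_nonneg u)) hu0.le
    calc ∫ u in Ioo (0:ℝ) (x * Yb), u ^ (-ρ) * U u / u
        ≤ ∫ u in Ioo (0:ℝ) (x * Yb), (x * Yb) ^ (τ - ρ) * (u ^ (-τ) * U u / u) := hstep1
      _ = (x * Yb) ^ (τ - ρ) * ∫ u in Ioo (0:ℝ) (x * Yb), u ^ (-τ) * U u / u :=
          integral_const_mul _ _
      _ ≤ (x * Yb) ^ (τ - ρ) * I τ := by
          refine mul_le_mul_of_nonneg_left htail_τ ?_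
          positivity
  -- pointwise bound on the small-t region
  have hbound1 : ∀ t ∈ Ioc (0:ℝ) Yb⁻¹, U (x/t) * |f t - t ^ ρ * l y| / t ≤
      CM * (l y * (g y + h y)) * (x ^ η * J (ρ-η) t + x ^ (-η) * J (ρ+η) t) := by
    intro t ht
    obtain ⟨ht0, htb⟩ := ht
    have hs : Yb ≤ t⁻¹ := by
      rw [← inv_inv Yb]
      exact inv_anti₀ (by positivity) htb
    have hsY₁ : Y₁ ≤ t⁻¹ := le_trans (le_max_left _ _) hs
    have hMt := hM t⁻¹ y hsY₁ hyY₁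
    rw [inv_inv] at hMt
    have hrw1 : (t⁻¹) ^ (-ρ) = t ^ ρ := by
      rw [Real.rpow_neg (inv_nonneg.2 ht0.le), Real.inv_rpow ht0.le, inv_inv]
    have hrw2 : t⁻¹ / y = x / t := by
      rw [hydef]; field_simp
    have hrw3 : y / t⁻¹ = t / x := by
      rw [hydef]; field_simp
    rw [hrw1, hrw2, hrw3] at hMt
    -- hMt : |f t - t^ρ l y| ≤ CM * (t^ρ * (l y * ((g y + h y) * (max (x/t) (t/x))^η)))
    have hQm : (max (x/t) (t/x)) ^ η ≤ (x/t) ^ η + (t/x) ^ η := by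
      rcases max_cases (x/t) (t/x) with ⟨hm, _⟩ | ⟨hm, _⟩ <;> rw [hm]
      · exact le_add_of_nonneg_right (by positivity)
      · exact le_add_of_nonneg_left (by positivity)
    have e1 : t ^ ρ * (x/t) ^ η = x ^ η * t ^ (ρ - η) := by
      rw [Real.div_rpow hxpos.le ht0.le, Real.rpow_sub ht0]
      field_simp
      try ring
    have e2 : t ^ ρ * (t/x) ^ η = x ^ (-η) * t ^ (ρ + η) := by
      rw [Real.div_rpow ht0.le hxpos.le, Real.rpow_add ht0, Real.rpow_neg hxpos.le]
      field_simp
      try ring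
    have hU0 : 0 ≤ U (x/t) := hU_nonneg _
    calc U (x/t) * |f t - t ^ ρ * l y| / t
        ≤ U (x/t) * (CM * (t ^ ρ * (l y * ((g y + h y) * (max (x/t) (t/x)) ^ η)))) / t :=
          (div_le_div_iff_of_pos_right ht0).2 (mul_le_mul_of_nonneg_left hMt hU0)
      _ ≤ U (x/t) * (CM * (t ^ ρ * (l y * ((g y + h y) * ((x/t) ^ η + (t/x) ^ η))))) / t := by
          refine (div_le_div_iff_of_pos_right ht0).2 (mul_le_mul_of_nonneg_left
            (mul_le_mul_of_nonneg_left (mul_le_mul_of_nonneg_left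
              (mul_le_mul_of_nonneg_left
                (mul_le_mul_of_nonneg_left hQm (add_nonneg (hg_nonneg _) (hh_nonneg _)))
                (hl_nonneg _)) (by positivity)) (by linarith)) hU0)
      _ = CM * (l y * (g y + h y)) *
          ((t ^ ρ * (x/t) ^ η) * (U (x/t) / t) + (t ^ ρ * (t/x) ^ η) * (U (x/t) / t)) := by
          ring
      _ = CM * (l y * (g y + h y)) * (x ^ η * J (ρ-η) t + x ^ (-η) * J (ρ+η) t) := by
          rw [e1, e2, hJdef]
          simp only
          ring
  -- integrabilities of the kernels
  have hJρint : IntegrableOn (J ρ) (Ioi 0) := hJint ρ (le_of_lt hσρ) (le_of_lt hρτ)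
  have hJmint : IntegrableOn (J (ρ-η)) (Ioi 0) := hJint (ρ-η) hρη₁ (by linarith)
  have hJpint : IntegrableOn (J (ρ+η)) (Ioi 0) := hJint (ρ+η) (by linarith) hρη₂
  have hJτint : IntegrableOn (J τ) (Ioi 0) := hJint τ (le_of_lt hστ) (le_refl τ)
  -- bound on |f| for large t
  have hbig : ∀ t ∈ Ioi Yb⁻¹, |f t| ≤ Mf * t ^ τ := by
    intro t ht
    have ht0 : 0 < t := lt_trans hYbinv ht
    have hti : t⁻¹ < Yb := by
      rw [← inv_inv Yb]
      exact inv_strictAnti₀ (by positivity) ht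
    have hw := hMf t⁻¹ ⟨by positivity, hti.le⟩
    rw [inv_inv] at hw
    have hrw : (t⁻¹) ^ τ = (t ^ τ)⁻¹ := Real.inv_rpow ht0.le τ
    rw [hrw, abs_mul, abs_inv, abs_of_pos (Real.rpow_pos_of_pos ht0 τ)] at hw
    have htτ : (0:ℝ) < t ^ τ := Real.rpow_pos_of_pos ht0 τ
    rw [inv_mul_le_iff₀ htτ] at hw
    calc |f t| ≤ t ^ τ * Mf := hw
      _ = Mf * t ^ τ := by ring
  -- the convolution integrand and its dominator
  set Fc : ℝ → ℝ := fun t => U (x/t) * f t / t with hFc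
  set Dom : ℝ → ℝ := fun t => l y * J ρ t +
    CM * (l y * (g y + h y)) * (x ^ η * J (ρ-η) t + x ^ (-η) * J (ρ+η) t) +
    Mf * J τ t with hDom
  have hDomInt : IntegrableOn Dom (Ioi 0) :=
    ((hJρint.const_mul _).add
      (((hJmint.const_mul _).add (hJpint.const_mul _)).const_mul _)).add
      (hJτint.const_mul _)
  have hFmeas : AEStronglyMeasurable Fc (volume.restrict (Ioi 0)) :=
    (((hU_meas.comp (measurable_const.div measurable_id)).mul hf_meas).div
      measurable_id).aestronglyMeasurable
  have hFabs : ∀ t ∈ Ioi (0:ℝ), ‖Fc t‖ = U (x/t) * |f t| / t := by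
    intro t ht
    have ht0 : 0 < t := ht
    rw [hFc]
    simp only
    rw [Real.norm_eq_abs, abs_div, abs_mul, abs_of_nonneg (hU_nonneg _), abs_of_pos ht0]
  have hFbound : ∀ t ∈ Ioi (0:ℝ), ‖Fc t‖ ≤ Dom t := by
    intro t ht
    have ht0 : 0 < t := ht
    rw [hFabs t ht]
    rcases le_or_gt t Yb⁻¹ with hle | hgt
    · -- small t
      have h1 := hbound1 t ⟨ht0, hle⟩
      have h2 : |f t| ≤ |f t - t ^ ρ * l y| + t ^ ρ * l y := by
        have := abs_sub_abs_le_abs_sub (f t) (t ^ ρ * l y)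
        have h3 : |t ^ ρ * l y| = t ^ ρ * l y := abs_of_nonneg
          (mul_nonneg (by positivity) (hl_nonneg _))
        calc |f t| ≤ |f t - t ^ ρ * l y| + |t ^ ρ * l y| := by
              have := abs_sub_le (f t) (t ^ ρ * l y) 0
              simp only [sub_zero] at this
              linarith [abs_sub_le (f t) (t ^ ρ * l y) 0]
          _ = |f t - t ^ ρ * l y| + t ^ ρ * l y := by rw [h3]
      have h4 : U (x/t) * |f t| / t ≤
          U (x/t) * |f t - t ^ ρ * l y| / t + U (x/t) * (t ^ ρ * l y) / t := by
        rw [← add_div, ← mul_add]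
        exact (div_le_div_iff_of_pos_right ht0).2 (mul_le_mul_of_nonneg_left h2 (hU_nonneg _))
      have h5 : U (x/t) * (t ^ ρ * l y) / t = l y * J ρ t := by
        rw [hJdef]; simp only; ring
      have h6 : (0:ℝ) ≤ Mf * J τ t := mul_nonneg hMf0 (hJnn τ t ht)
      calc U (x/t) * |f t| / t
          ≤ U (x/t) * |f t - t ^ ρ * l y| / t + U (x/t) * (t ^ ρ * l y) / t := h4
        _ ≤ CM * (l y * (g y + h y)) * (x ^ η * J (ρ-η) t + x ^ (-η) * J (ρ+η) t) +
            l y * J ρ t := by rw [h5]; exact add_le_add_left h1 _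
        _ ≤ Dom t := by rw [hDom]; simp only; linarith
    · -- large t
      have h1 := hbig t hgt
      have h2 : U (x/t) * |f t| / t ≤ U (x/t) * (Mf * t ^ τ) / t :=
        (div_le_div_iff_of_pos_right ht0).2 (mul_le_mul_of_nonneg_left (hbig t hgt) (hU_nonneg _))
      have h3 : U (x/t) * (Mf * t ^ τ) / t = Mf * J τ t := by
        rw [hJdef]; simp only; ring
      have h4 : (0:ℝ) ≤ l y * J ρ t := mul_nonneg (hl_nonneg _) (hJnn ρ t ht)
      have h5 : (0:ℝ) ≤ CM * (l y * (g y + h y)) *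
          (x ^ η * J (ρ-η) t + x ^ (-η) * J (ρ+η) t) := by
        refine mul_nonneg (mul_nonneg (by linarith) (mul_nonneg (hl_nonneg _)
          (add_nonneg (hg_nonneg _) (hh_nonneg _)))) ?_
        refine add_nonneg (mul_nonneg (by positivity) (hJnn _ t ht))
          (mul_nonneg (by positivity) (hJnn _ t ht))
      calc U (x/t) * |f t| / t ≤ Mf * J τ t := h2.trans_eq h3
        _ ≤ Dom t := by rw [hDom]; simp only; linarith
  have hFcInt : IntegrableOn Fc (Ioi 0) :=
    Integrable.mono' hDomInt hFmeas
      ((ae_restrict_iff' measurableSet_Ioi).2 (Eventually.of_forall hFbound))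
  -- rewrite the difference as a single integral
  have hconv : mellinConv U f x = ∫ t in Ioi (0:ℝ), Fc t := rfl
  have hmelT : mellinT U ρ = I ρ := rfl
  have hTarget : mellinT U ρ * (x ^ ρ * l y) = ∫ t in Ioi (0:ℝ), l y * J ρ t := by
    rw [integral_const_mul, hJeq ρ, hmelT]
    ring
  have hG : IntegrableOn (fun t => Fc t - l y * J ρ t) (Ioi 0) :=
    hFcInt.sub (hJρint.const_mul _)
  have hdiff : mellinConv U f x - mellinT U ρ * (x ^ ρ * l y) =
      ∫ t in Ioi (0:ℝ), (Fc t - l y * J ρ t) := by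
    rw [hconv, hTarget]
    exact (integral_sub hFcInt (hJρint.const_mul _)).symm
  -- split the integral
  have hsplitInt : ∫ t in Ioi (0:ℝ), (Fc t - l y * J ρ t) =
      (∫ t in Ioc (0:ℝ) Yb⁻¹, (Fc t - l y * J ρ t)) +
      ∫ t in Ioi Yb⁻¹, (Fc t - l y * J ρ t) := by
    rw [← Ioc_union_Ioi_eq_Ioi hYbinv.le]
    exact setIntegral_union (Ioc_disjoint_Ioi le_rfl) measurableSet_Ioi
      (hG.mono_set Ioc_subset_Ioi_self) (hG.mono_set (Ioi_subset_Ioi hYbinv.le))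
  -- identity for the difference integrand
  have hGid : ∀ t ∈ Ioi (0:ℝ), Fc t - l y * J ρ t = U (x/t) * (f t - t ^ ρ * l y) / t := by
    intro t ht
    rw [hFc, hJdef]
    simp only
    ring
  -- piece 1
  have hB1int : IntegrableOn (fun t => CM * (l y * (g y + h y)) *
      (x ^ η * J (ρ-η) t + x ^ (-η) * J (ρ+η) t)) (Ioi 0) :=
    ((hJmint.const_mul _).add (hJpint.const_mul _)).const_mul _
  have hB1nn : ∀ t ∈ Ioi (0:ℝ), 0 ≤ CM * (l y * (g y + h y)) *
      (x ^ η * J (ρ-η) t + x ^ (-η) * J (ρ+η) t) := by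
    intro t ht
    refine mul_nonneg (mul_nonneg (by linarith) (mul_nonneg (hl_nonneg _)
      (add_nonneg (hg_nonneg _) (hh_nonneg _)))) ?_
    exact add_nonneg (mul_nonneg (by positivity) (hJnn _ t ht))
      (mul_nonneg (by positivity) (hJnn _ t ht))
  have hp1 : |∫ t in Ioc (0:ℝ) Yb⁻¹, (Fc t - l y * J ρ t)| ≤
      CM * (I (ρ-η) + I (ρ+η)) * (x ^ ρ * (l y * (g y + h y))) := by
    have hb : ∀ᵐ t ∂(volume.restrict (Ioc (0:ℝ) Yb⁻¹)), ‖Fc t - l y * J ρ t‖ ≤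
        CM * (l y * (g y + h y)) * (x ^ η * J (ρ-η) t + x ^ (-η) * J (ρ+η) t) := by
      refine (ae_restrict_iff' measurableSet_Ioc).2 (Eventually.of_forall fun t ht => ?_)
      have ht0 : 0 < t := ht.1
      rw [hGid t ht0, Real.norm_eq_abs, abs_div, abs_mul, abs_of_nonneg (hU_nonneg _),
        abs_of_pos ht0]
      exact hbound1 t ht
    have h1 : ‖∫ t in Ioc (0:ℝ) Yb⁻¹, (Fc t - l y * J ρ t)‖ ≤
        ∫ t in Ioc (0:ℝ) Yb⁻¹, CM * (l y * (g y + h y)) *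
          (x ^ η * J (ρ-η) t + x ^ (-η) * J (ρ+η) t) :=
      norm_integral_le_of_norm_le (hB1int.mono_set Ioc_subset_Ioi_self) hb
    have h2 : ∫ t in Ioc (0:ℝ) Yb⁻¹, CM * (l y * (g y + h y)) *
        (x ^ η * J (ρ-η) t + x ^ (-η) * J (ρ+η) t) ≤
        ∫ t in Ioi (0:ℝ), CM * (l y * (g y + h y)) *
        (x ^ η * J (ρ-η) t + x ^ (-η) * J (ρ+η) t) := by
      refine setIntegral_mono_set hB1int ?_
        (HasSubset.Subset.eventuallyLE Ioc_subset_Ioi_self)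
      exact (ae_restrict_iff' measurableSet_Ioi).2 (Eventually.of_forall hB1nn)
    have h3 : ∫ t in Ioi (0:ℝ), CM * (l y * (g y + h y)) *
        (x ^ η * J (ρ-η) t + x ^ (-η) * J (ρ+η) t) =
        CM * (I (ρ-η) + I (ρ+η)) * (x ^ ρ * (l y * (g y + h y))) := by
      rw [integral_const_mul, integral_add (hJmint.const_mul _) (hJpint.const_mul _),
        integral_const_mul, integral_const_mul, hJeq (ρ-η), hJeq (ρ+η)]
      have ha : x ^ η * (x ^ (ρ-η) * I (ρ-η)) = x ^ ρ * I (ρ-η) := by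
        rw [← mul_assoc, ← Real.rpow_add hxpos]; ring_nf
      have hbb : x ^ (-η) * (x ^ (ρ+η) * I (ρ+η)) = x ^ ρ * I (ρ+η) := by
        rw [← mul_assoc, ← Real.rpow_add hxpos]; ring_nf
      rw [ha, hbb]; ring
    rw [← Real.norm_eq_abs]
    calc ‖∫ t in Ioc (0:ℝ) Yb⁻¹, (Fc t - l y * J ρ t)‖
        ≤ ∫ t in Ioc (0:ℝ) Yb⁻¹, CM * (l y * (g y + h y)) *
          (x ^ η * J (ρ-η) t + x ^ (-η) * J (ρ+η) t) := h1
      _ ≤ ∫ t in Ioi (0:ℝ), CM * (l y * (g y + h y)) *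
          (x ^ η * J (ρ-η) t + x ^ (-η) * J (ρ+η) t) := h2
      _ = CM * (I (ρ-η) + I (ρ+η)) * (x ^ ρ * (l y * (g y + h y))) := h3
  -- piece 2
  have hp2 : |∫ t in Ioi Yb⁻¹, (Fc t - l y * J ρ t)| ≤
      Mf * (x ^ τ * I τ) + l y * (x ^ ρ * ((x * Yb) ^ (τ-ρ) * I τ)) := by
    have hBint0 : IntegrableOn (fun t => Mf * J τ t + l y * J ρ t) (Ioi 0) :=
      (hJτint.const_mul _).add (hJρint.const_mul _)
    have hBint : IntegrableOn (fun t => Mf * J τ t + l y * J ρ t) (Ioi Yb⁻¹) :=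
      hBint0.mono_set (Ioi_subset_Ioi hYbinv.le)
    have hb : ∀ᵐ t ∂(volume.restrict (Ioi Yb⁻¹)), ‖Fc t - l y * J ρ t‖ ≤
        Mf * J τ t + l y * J ρ t := by
      refine (ae_restrict_iff' measurableSet_Ioi).2 (Eventually.of_forall fun t ht => ?_)
      have ht0 : 0 < t := lt_trans hYbinv ht
      have h1 : ‖Fc t - l y * J ρ t‖ ≤ ‖Fc t‖ + l y * J ρ t := by
        have := norm_sub_le (Fc t) (l y * J ρ t)
        have h2 : ‖l y * J ρ t‖ = l y * J ρ t := by
          rw [Real.norm_eq_abs, abs_of_nonneg (mul_nonneg (hl_nonneg _) (hJnn ρ t ht0))]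
        linarith [norm_sub_le (Fc t) (l y * J ρ t), h2.le]
      have h3 : ‖Fc t‖ ≤ Mf * J τ t := by
        rw [hFabs t ht0]
        have h4 : U (x/t) * |f t| / t ≤ U (x/t) * (Mf * t ^ τ) / t :=
          (div_le_div_iff_of_pos_right ht0).2 (mul_le_mul_of_nonneg_left (hbig t ht) (hU_nonneg _))
        have h5 : U (x/t) * (Mf * t ^ τ) / t = Mf * J τ t := by
          rw [hJdef]; simp only; ring
        linarith [h4, h5.le]
      linarith
    have h1 : ‖∫ t in Ioi Yb⁻¹, (Fc t - l y * J ρ t)‖ ≤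
        ∫ t in Ioi Yb⁻¹, (Mf * J τ t + l y * J ρ t) :=
      norm_integral_le_of_norm_le hBint hb
    have h2 : ∫ t in Ioi Yb⁻¹, (Mf * J τ t + l y * J ρ t) =
        Mf * (x ^ τ * ∫ u in Ioo (0:ℝ) (x * Yb), u ^ (-τ) * U u / u) +
        l y * (x ^ ρ * ∫ u in Ioo (0:ℝ) (x * Yb), u ^ (-ρ) * U u / u) := by
      rw [integral_add ((hJτint.mono_set (Ioi_subset_Ioi hYbinv.le)).const_mul _)
        ((hJρint.mono_set (Ioi_subset_Ioi hYbinv.le)).const_mul _),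
        integral_const_mul, integral_const_mul, hJreg τ, hJreg ρ]
    have h3 : Mf * (x ^ τ * ∫ u in Ioo (0:ℝ) (x * Yb), u ^ (-τ) * U u / u) ≤
        Mf * (x ^ τ * I τ) := by
      refine mul_le_mul_of_nonneg_left (mul_le_mul_of_nonneg_left htail_τ ?_) hMf0
      positivity
    have h4 : l y * (x ^ ρ * ∫ u in Ioo (0:ℝ) (x * Yb), u ^ (-ρ) * U u / u) ≤
        l y * (x ^ ρ * ((x * Yb) ^ (τ-ρ) * I τ)) := by
      refine mul_le_mul_of_nonneg_left (mul_le_mul_of_nonneg_left htail_ρ ?_) (hl_nonneg _)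
      positivity
    rw [← Real.norm_eq_abs]
    calc ‖∫ t in Ioi Yb⁻¹, (Fc t - l y * J ρ t)‖
        ≤ ∫ t in Ioi Yb⁻¹, (Mf * J τ t + l y * J ρ t) := h1
      _ = Mf * (x ^ τ * ∫ u in Ioo (0:ℝ) (x * Yb), u ^ (-τ) * U u / u) +
          l y * (x ^ ρ * ∫ u in Ioo (0:ℝ) (x * Yb), u ^ (-ρ) * U u / u) := h2
      _ ≤ Mf * (x ^ τ * I τ) + l y * (x ^ ρ * ((x * Yb) ^ (τ-ρ) * I τ)) :=
          add_le_add h3 h4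
  -- power comparisons
  have hxy : x ^ (τ - ρ) = y ^ (-(τ - ρ)) := by
    rw [hydef, Real.rpow_neg (inv_nonneg.2 hxpos.le), Real.inv_rpow hxpos.le, inv_inv]
  have hpw := hPow y hyY₂
  have hpw1 : y ^ (-(τ - ρ)) ≤ CP * CP * (g y * l y) := by
    have ha : y ^ (-(τ - ρ)) = y ^ (-((τ-ρ)/2)) * y ^ (-((τ-ρ)/2)) := by
      rw [← Real.rpow_add hypos]; ring_nf
    rw [ha]
    calc y ^ (-((τ-ρ)/2)) * y ^ (-((τ-ρ)/2)) ≤ (CP * g y) * (CP * l y) :=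
          mul_le_mul hpw.1 hpw.2 (by positivity) (mul_nonneg (by linarith) (hg_nonneg _))
      _ = CP * CP * (g y * l y) := by ring
  have hpw2 : y ^ (-(τ - ρ)) ≤ CP * g y := by
    calc y ^ (-(τ - ρ)) ≤ y ^ (-((τ-ρ)/2)) :=
          Real.rpow_le_rpow_of_exponent_le hy1 (by linarith)
      _ ≤ CP * g y := hpw.1
  -- term estimates
  have hterm2 : Mf * (x ^ τ * I τ) ≤
      Mf * I τ * (CP * CP) * (x ^ ρ * (l y * (g y + h y))) := by
    have hxτ : x ^ τ = x ^ ρ * x ^ (τ - ρ) := by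
      rw [← Real.rpow_add hxpos]; ring_nf
    have h1 : x ^ τ ≤ x ^ ρ * (CP * CP * (g y * l y)) := by
      rw [hxτ, hxy]
      exact mul_le_mul_of_nonneg_left hpw1 (by positivity)
    calc Mf * (x ^ τ * I τ) ≤ Mf * ((x ^ ρ * (CP * CP * (g y * l y))) * I τ) := by
          refine mul_le_mul_of_nonneg_left (mul_le_mul_of_nonneg_right h1 (hInn τ)) hMf0
      _ = Mf * I τ * (CP * CP) * (x ^ ρ * (l y * g y)) := by ring
      _ ≤ Mf * I τ * (CP * CP) * (x ^ ρ * (l y * (g y + h y))) := by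
          refine mul_le_mul_of_nonneg_left ?_
            (mul_nonneg (mul_nonneg hMf0 (hInn τ)) (by positivity))
          refine mul_le_mul_of_nonneg_left ?_ (by positivity)
          refine mul_le_mul_of_nonneg_left ?_ (hl_nonneg _)
          linarith [hh_nonneg y]
  have hterm3 : l y * (x ^ ρ * ((x * Yb) ^ (τ-ρ) * I τ)) ≤
      Yb ^ (τ-ρ) * I τ * CP * (x ^ ρ * (l y * (g y + h y))) := by
    have hmul : (x * Yb) ^ (τ-ρ) = x ^ (τ-ρ) * Yb ^ (τ-ρ) :=
      Real.mul_rpow hxpos.le hYbpos.le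
    have h1 : (x * Yb) ^ (τ-ρ) ≤ CP * g y * Yb ^ (τ-ρ) := by
      rw [hmul, hxy]
      exact mul_le_mul_of_nonneg_right hpw2 (by positivity)
    calc l y * (x ^ ρ * ((x * Yb) ^ (τ-ρ) * I τ))
        ≤ l y * (x ^ ρ * ((CP * g y * Yb ^ (τ-ρ)) * I τ)) := by
          refine mul_le_mul_of_nonneg_left (mul_le_mul_of_nonneg_left
            (mul_le_mul_of_nonneg_right h1 (hInn τ)) (by positivity)) (hl_nonneg _)
      _ = Yb ^ (τ-ρ) * I τ * CP * (x ^ ρ * (l y * g y)) := by ring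
      _ ≤ Yb ^ (τ-ρ) * I τ * CP * (x ^ ρ * (l y * (g y + h y))) := by
          refine mul_le_mul_of_nonneg_left ?_
            (mul_nonneg (mul_nonneg (by positivity) (hInn τ)) (by linarith))
          refine mul_le_mul_of_nonneg_left ?_ (by positivity)
          refine mul_le_mul_of_nonneg_left ?_ (hl_nonneg _)
          linarith [hh_nonneg y]
  -- conclude
  have hRHSnn : 0 ≤ x ^ ρ * l y * (g y + h y) := by
    refine mul_nonneg (mul_nonneg (by positivity) (hl_nonneg _))
      (add_nonneg (hg_nonneg _) (hh_nonneg _))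
  rw [Real.norm_eq_abs, Real.norm_eq_abs, abs_of_nonneg hRHSnn, hdiff, hsplitInt]
  calc |(∫ t in Ioc (0:ℝ) Yb⁻¹, (Fc t - l y * J ρ t)) +
        ∫ t in Ioi Yb⁻¹, (Fc t - l y * J ρ t)|
      ≤ |∫ t in Ioc (0:ℝ) Yb⁻¹, (Fc t - l y * J ρ t)| +
        |∫ t in Ioi Yb⁻¹, (Fc t - l y * J ρ t)| := abs_add_le _ _
    _ ≤ CM * (I (ρ-η) + I (ρ+η)) * (x ^ ρ * (l y * (g y + h y))) +
        (Mf * (x ^ τ * I τ) + l y * (x ^ ρ * ((x * Yb) ^ (τ-ρ) * I τ))) :=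
        add_le_add hp1 hp2
    _ ≤ CM * (I (ρ-η) + I (ρ+η)) * (x ^ ρ * (l y * (g y + h y))) +
        (Mf * I τ * (CP * CP) * (x ^ ρ * (l y * (g y + h y))) +
         Yb ^ (τ-ρ) * I τ * CP * (x ^ ρ * (l y * (g y + h y)))) := by
        exact add_le_add_right (add_le_add hterm2 hterm3) _
    _ = Cfin * (x ^ ρ * l y * (g y + h y)) := by rw [hCfin]; ring
end

section
/- Let t > 0, λ > 0, η₁ > 1, η₂ > 0, and p, q > 0 with p + q = 1. Then there exist positive constants c₁ and c₂, independent of k, such that 0 < a_k − â_k ≤ c₁ â_k/(k+1) and 0 < b_k − b̂_k ≤ c₂ b̂_k/(k+1) for all k ≥ 0, where â_k = exp{η₂λtq/(η₁+η₂) − λt}·(η₁λtp)^{k+1}/(k!(k+1)!) and b̂_k = exp{η₁λtp/(η₁+η₂) − λt}·(η₂λtq)^{k+1}/(k!(k+1)!). -/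
open Filter Asymptotics MeasureTheory

/-- `P_{n,k}` from Kou's double exponential jump model: `P_{n,n} = p^n` and, for
`1 ≤ k ≤ n−1`,
`P_{n,k} = Σ_{i=k}^{n−1} C(n−k−1, i−k) C(n,i) (η₁/(η₁+η₂))^{i−k} (η₂/(η₁+η₂))^{n−i} p^i q^{n−i}`. -/
noncomputable def Pcoef (η₁ η₂ p q : ℝ) (n k : ℕ) : ℝ :=
  if k = n then p ^ n
  else ∑ i ∈ Finset.Ico k n,
    ((n - k - 1).choose (i - k) : ℝ) * (n.choose i : ℝ) *
      (η₁ / (η₁ + η₂)) ^ (i - k) * (η₂ / (η₁ + η₂)) ^ (n - i) * p ^ i * q ^ (n - i)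

/-- `Q_{n,k}` from Kou's double exponential jump model: `Q_{n,n} = q^n` and, for
`1 ≤ k ≤ n−1`,
`Q_{n,k} = Σ_{i=k}^{n−1} C(n−k−1, i−k) C(n,i) (η₁/(η₁+η₂))^{n−i} (η₂/(η₁+η₂))^{i−k} p^{n−i} q^i`. -/
noncomputable def Qcoef (η₁ η₂ p q : ℝ) (n k : ℕ) : ℝ :=
  if k = n then q ^ n
  else ∑ i ∈ Finset.Ico k n,
    ((n - k - 1).choose (i - k) : ℝ) * (n.choose i : ℝ) *
      (η₁ / (η₁ + η₂)) ^ (n - i) * (η₂ / (η₁ + η₂)) ^ (i - k) * p ^ (n - i) * q ^ i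

/-- The Poisson weights `π_n = e^{−λt} (λt)^n / n!`. -/
noncomputable def poisCoef (lam t : ℝ) (n : ℕ) : ℝ :=
  Real.exp (-(lam * t)) * (lam * t) ^ n / (n.factorial : ℝ)

/-- `a_k = (η₁^{k+1}/k!) Σ_{n=k+1}^∞ π_n P_{n,k+1}` (the series is reindexed by
`n = m + (k+1)`, `m ≥ 0`). -/
noncomputable def aCoef (lam t η₁ η₂ p q : ℝ) (k : ℕ) : ℝ :=
  η₁ ^ (k + 1) / (k.factorial : ℝ) *
    ∑' m : ℕ, poisCoef lam t (m + (k + 1)) * Pcoef η₁ η₂ p q (m + (k + 1)) (k + 1)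

/-- `b_k = (η₂^{k+1}/k!) Σ_{n=k+1}^∞ π_n Q_{n,k+1}` (the series is reindexed by
`n = m + (k+1)`, `m ≥ 0`). -/
noncomputable def bCoef (lam t η₁ η₂ p q : ℝ) (k : ℕ) : ℝ :=
  η₂ ^ (k + 1) / (k.factorial : ℝ) *
    ∑' m : ℕ, poisCoef lam t (m + (k + 1)) * Qcoef η₁ η₂ p q (m + (k + 1)) (k + 1)

/-- `G₁(t,u) = Σ_{k=0}^∞ a_k u^k`. -/
noncomputable def G1 (lam t η₁ η₂ p q : ℝ) (u : ℝ) : ℝ :=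
  ∑' k : ℕ, aCoef lam t η₁ η₂ p q k * u ^ k

/-- `G₂(t,−u) = Σ_{k=0}^∞ b_k u^k`; `G2m lam t η₁ η₂ p q u` stands for `G₂(t,−u)`. -/
noncomputable def G2m (lam t η₁ η₂ p q : ℝ) (u : ℝ) : ℝ :=
  ∑' k : ℕ, bCoef lam t η₁ η₂ p q k * u ^ k

/-- `H₁(t,x) = G₁(t, log x)` for `x > 1`. -/
noncomputable def H1fun (lam t η₁ η₂ p q : ℝ) (x : ℝ) : ℝ :=
  G1 lam t η₁ η₂ p q (Real.log x)

/-- `H₂(t,x) = G₂(t, log x) = G2m(t, log(1/x))` for `0 < x < 1`. -/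
noncomputable def H2fun (lam t η₁ η₂ p q : ℝ) (x : ℝ) : ℝ :=
  G2m lam t η₁ η₂ p q (Real.log x⁻¹)

/-- The density of the absolutely continuous part of the law of the exponential compound
Poisson factor: `H(t,x) = H₁(t,x) x^{−η₁−1}` for `x > 1` and `H(t,x) = H₂(t,x) x^{η₂−1}`
for `0 < x < 1`. -/
noncomputable def Hfun (lam t η₁ η₂ p q : ℝ) (x : ℝ) : ℝ :=
  if 1 < x then H1fun lam t η₁ η₂ p q x * x ^ (-η₁ - 1)
  else H2fun lam t η₁ η₂ p q x * x ^ (η₂ - 1)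

/-- `â_k = exp{η₂λtq/(η₁+η₂) − λt} (η₁λtp)^{k+1} / (k!(k+1)!)`. -/
noncomputable def aHat (lam t η₁ η₂ p q : ℝ) (k : ℕ) : ℝ :=
  Real.exp (η₂ * lam * t * q / (η₁ + η₂) - lam * t) * (η₁ * lam * t * p) ^ (k + 1) /
    ((k.factorial : ℝ) * ((k + 1).factorial : ℝ))

/-- `b̂_k = exp{η₁λtp/(η₁+η₂) − λt} (η₂λtq)^{k+1} / (k!(k+1)!)`. -/
noncomputable def bHat (lam t η₁ η₂ p q : ℝ) (k : ℕ) : ℝ :=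
  Real.exp (η₁ * lam * t * p / (η₁ + η₂) - lam * t) * (η₂ * lam * t * q) ^ (k + 1) /
    ((k.factorial : ℝ) * ((k + 1).factorial : ℝ))

lemma real_exp_tsum (x : ℝ) : ∑' n : ℕ, x ^ n / (n.factorial : ℝ) = Real.exp x := by
  rw [Real.exp_eq_exp_ℝ, NormedSpace.exp_eq_tsum_div]

lemma choose_le_two_pow' (n k : ℕ) : n.choose k ≤ 2 ^ n := by
  rcases le_or_gt k n with h | h
  · calc n.choose k ≤ ∑ m ∈ Finset.range (n + 1), n.choose m :=
        Finset.single_le_sum (fun _ _ => Nat.zero_le _) (Finset.mem_range.mpr (Nat.lt_succ_of_le h))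
    _ = 2 ^ n := Nat.sum_range_choose n
  · simp [Nat.choose_eq_zero_of_lt h]

lemma fact_ineq (k j : ℕ) (hj : 1 ≤ j) :
    (k + 2) * j.factorial * (k + 1).factorial ≤ (k + 1 + j).factorial := by
  induction j, hj using Nat.le_induction with
  | base =>
    rw [show k + 1 + 1 = k + 2 from rfl, Nat.factorial_succ (k + 1)]
    simp [Nat.factorial_one]
  | succ j hj ih =>
    calc (k + 2) * (j + 1).factorial * (k + 1).factorial
        = (j + 1) * ((k + 2) * j.factorial * (k + 1).factorial) := by
          rw [Nat.factorial_succ]; ring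
      _ ≤ (j + 1) * (k + 1 + j).factorial := Nat.mul_le_mul_left _ ih
      _ ≤ (k + 1 + j + 1) * (k + 1 + j).factorial :=
          Nat.mul_le_mul_right _ (by omega)
      _ = (k + 1 + (j + 1)).factorial := by
          rw [show k + 1 + (j + 1) = (k + 1 + j) + 1 from by omega, Nat.factorial_succ]

/-- The remainder terms in the expansion of `a_k`. -/
noncomputable def hterm (lam t η₁ η₂ p q : ℝ) (k m : ℕ) : ℝ :=
  (lam * t) ^ m * ∑ j ∈ Finset.Ico 1 m,
    ((m - 1).choose j : ℝ) * ((k + 1).factorial : ℝ) / (((k + 1) + j).factorial : ℝ) *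
      (η₁ * p / (η₁ + η₂)) ^ j * (η₂ * q / (η₁ + η₂)) ^ (m - j) / ((m - j).factorial : ℝ)

lemma term_eq (lam t η₁ η₂ p q : ℝ) (hlt : 0 < lam * t) (hη₁ : 0 < η₁) (hη₂ : 0 < η₂)
    (hp : 0 < p) (hq : 0 < q) (k m : ℕ) :
    η₁ ^ (k + 1) / (k.factorial : ℝ) *
      (poisCoef lam t (m + (k + 1)) * Pcoef η₁ η₂ p q (m + (k + 1)) (k + 1)) =
    Real.exp (-(lam * t)) * (η₁ * lam * t * p) ^ (k + 1) /
        ((k.factorial : ℝ) * ((k + 1).factorial : ℝ)) *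
      ((η₂ * lam * t * q / (η₁ + η₂)) ^ m / (m.factorial : ℝ) +
        hterm lam t η₁ η₂ p q k m) := by
  have hE : η₁ + η₂ ≠ 0 := by positivity
  have hkf : (k.factorial : ℝ) ≠ 0 := by exact_mod_cast k.factorial_ne_zero
  have hk1f : ((k + 1).factorial : ℝ) ≠ 0 := by exact_mod_cast (k + 1).factorial_ne_zero
  rcases Nat.eq_zero_or_pos m with hm | hm
  · subst hm
    rw [show (0 : ℕ) + (k + 1) = k + 1 from by omega]
    rw [Pcoef, if_pos rfl, poisCoef, hterm]
    simp only [Finset.Ico_self, Finset.sum_empty, mul_zero, pow_zero,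
      Nat.factorial_zero, Nat.cast_one, add_zero]
    field_simp
    rw [Finset.Ico_eq_empty_of_le (Nat.zero_le 1)]
    simp
    ring
  · have hne : (k + 1) ≠ (m + (k + 1)) := by omega
    rw [poisCoef, Pcoef, if_neg hne, Finset.sum_Ico_eq_sum_range,
      show m + (k + 1) - (k + 1) = m from by omega]
    -- per-term identity for j < m
    have claim : ∀ j < m,
        η₁ ^ (k + 1) / (k.factorial : ℝ) *
          (Real.exp (-(lam * t)) * (lam * t) ^ (m + (k + 1)) / ((m + (k + 1)).factorial : ℝ) *
            (((m - 1).choose ((k + 1) + j - (k + 1)) : ℝ) *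
              ((m + (k + 1)).choose ((k + 1) + j) : ℝ) *
              (η₁ / (η₁ + η₂)) ^ ((k + 1) + j - (k + 1)) *
              (η₂ / (η₁ + η₂)) ^ (m + (k + 1) - ((k + 1) + j)) *
              p ^ ((k + 1) + j) * q ^ (m + (k + 1) - ((k + 1) + j)))) =
        Real.exp (-(lam * t)) * (η₁ * lam * t * p) ^ (k + 1) /
            ((k.factorial : ℝ) * ((k + 1).factorial : ℝ)) *
          ((lam * t) ^ m *
            (((m - 1).choose j : ℝ) * ((k + 1).factorial : ℝ) / (((k + 1) + j).factorial : ℝ) *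
              (η₁ * p / (η₁ + η₂)) ^ j * (η₂ * q / (η₁ + η₂)) ^ (m - j) /
              ((m - j).factorial : ℝ))) := by
      intro j hj
      rw [show (k + 1) + j - (k + 1) = j from by omega,
        show m + (k + 1) - ((k + 1) + j) = m - j from by omega]
      have hch : ((m + (k + 1)).choose ((k + 1) + j) : ℝ) * (((k + 1) + j).factorial : ℝ) *
          ((m - j).factorial : ℝ) = ((m + (k + 1)).factorial : ℝ) := by
        have h := Nat.choose_mul_factorial_mul_factorial
          (show (k + 1) + j ≤ m + (k + 1) from by omega)
        rw [show m + (k + 1) - ((k + 1) + j) = m - j from by omega] at h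
        exact_mod_cast congrArg Nat.cast h
      have hmjf : ((m - j).factorial : ℝ) ≠ 0 := by exact_mod_cast (m - j).factorial_ne_zero
      have hkjf : (((k + 1) + j).factorial : ℝ) ≠ 0 := by
        exact_mod_cast ((k + 1) + j).factorial_ne_zero
      have hmkf : ((m + (k + 1)).factorial : ℝ) ≠ 0 := by
        exact_mod_cast (m + (k + 1)).factorial_ne_zero
      have hchne : ((m + (k + 1)).choose ((k + 1) + j) : ℝ) ≠ 0 := by
        have := Nat.choose_pos (show (k + 1) + j ≤ m + (k + 1) from by omega)
        positivity
      rw [← hch]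
      rw [pow_add (lam * t) m (k + 1), pow_add p (k + 1) j]
      field_simp
      ring
    rw [Finset.mul_sum, Finset.mul_sum]
    rw [Finset.sum_congr rfl (fun j hj => claim j (Finset.mem_range.mp hj))]
    rw [hterm, Finset.range_eq_Ico, Finset.sum_eq_sum_Ico_succ_bot hm, mul_add,
      Finset.mul_sum, Finset.mul_sum]
    congr 1
    simp only [Nat.choose_zero_right, Nat.cast_one, add_zero, pow_zero, Nat.sub_zero,
      one_mul, mul_one]
    rw [show η₂ * lam * t * q / (η₁ + η₂) = (lam * t) * (η₂ * q / (η₁ + η₂)) from by ring,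
      mul_pow]
    field_simp
    rw [← mul_pow]; ring

lemma hterm_nonneg (lam t η₁ η₂ p q : ℝ) (hlt : 0 ≤ lam * t) (hη₁ : 0 < η₁) (hη₂ : 0 < η₂)
    (hp : 0 ≤ p) (hq : 0 ≤ q) (k m : ℕ) : 0 ≤ hterm lam t η₁ η₂ p q k m := by
  have hE : 0 < η₁ + η₂ := by positivity
  apply mul_nonneg (by positivity)
  exact Finset.sum_nonneg fun j _ => by positivity

lemma hterm_le (lam t η₁ η₂ p q : ℝ) (hlt : 0 ≤ lam * t) (hη₁ : 0 < η₁) (hη₂ : 0 < η₂)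
    (hp : 0 < p) (hq : 0 < q) (hpq : p + q = 1) (k m : ℕ) :
    hterm lam t η₁ η₂ p q k m ≤ (8 * (lam * t)) ^ m / (m.factorial : ℝ) / ((k : ℝ) + 1) := by
  have hE : 0 < η₁ + η₂ := by positivity
  have hA1 : η₁ * p / (η₁ + η₂) ≤ 1 := by
    rw [div_le_one hE]; nlinarith
  have hB1 : η₂ * q / (η₁ + η₂) ≤ 1 := by
    rw [div_le_one hE]; nlinarith
  have hbnd : ∀ j ∈ Finset.Ico 1 m,
      ((m - 1).choose j : ℝ) * ((k + 1).factorial : ℝ) / (((k + 1) + j).factorial : ℝ) *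
        (η₁ * p / (η₁ + η₂)) ^ j * (η₂ * q / (η₁ + η₂)) ^ (m - j) / ((m - j).factorial : ℝ) ≤
      (4 : ℝ) ^ m / (((k : ℝ) + 1) * (m.factorial : ℝ)) := by
    intro j hj
    obtain ⟨hj1, hjm⟩ := Finset.mem_Ico.mp hj
    have hX : ((m - 1).choose j : ℝ) ≤ 2 ^ m := by
      have := le_trans (choose_le_two_pow' (m - 1) j)
        (Nat.pow_le_pow_right (by norm_num) (by omega : m - 1 ≤ m))
      exact_mod_cast this
    have hfact : ((k : ℝ) + 1) * (j.factorial : ℝ) * ((k + 1).factorial : ℝ) ≤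
        (((k + 1) + j).factorial : ℝ) := by
      have h2 : ((k : ℝ) + 2) * (j.factorial : ℝ) * ((k + 1).factorial : ℝ) ≤
          (((k + 1) + j).factorial : ℝ) := by exact_mod_cast fact_ineq k j hj1
      have : (0 : ℝ) ≤ (j.factorial : ℝ) * ((k + 1).factorial : ℝ) := by positivity
      nlinarith
    have e1 : ((m - 1).choose j : ℝ) * ((k + 1).factorial : ℝ) / (((k + 1) + j).factorial : ℝ) ≤
        2 ^ m / (((k : ℝ) + 1) * (j.factorial : ℝ)) := by
      rw [div_le_div_iff₀ (by positivity) (by positivity)]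
      have h1 : (0 : ℝ) ≤ ((k : ℝ) + 1) * (j.factorial : ℝ) := by positivity
      have h2 : (0 : ℝ) ≤ ((k + 1).factorial : ℝ) := by positivity
      nlinarith [hfact, hX, pow_nonneg (by norm_num : (0:ℝ) ≤ 2) m]
    have e2 : ((m - 1).choose j : ℝ) * ((k + 1).factorial : ℝ) / (((k + 1) + j).factorial : ℝ) *
        (η₁ * p / (η₁ + η₂)) ^ j * (η₂ * q / (η₁ + η₂)) ^ (m - j) / ((m - j).factorial : ℝ) ≤
        2 ^ m / (((k : ℝ) + 1) * (j.factorial : ℝ)) * 1 * 1 / ((m - j).factorial : ℝ) := by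
      gcongr
      all_goals first
        | exact e1
        | exact pow_le_one₀ (by positivity) hA1
        | exact pow_le_one₀ (by positivity) hB1
        | positivity
    refine e2.trans ?_
    rw [mul_one, mul_one, div_div, div_le_div_iff₀ (by positivity) (by positivity)]
    have hm! : (m.factorial : ℝ) ≤ 2 ^ m * ((j.factorial : ℝ) * ((m - j).factorial : ℝ)) := by
      have h1 : m.factorial ≤ 2 ^ m * (j.factorial * (m - j).factorial) := by
        calc m.factorial = m.choose j * j.factorial * (m - j).factorial :=
              (Nat.choose_mul_factorial_mul_factorial (le_of_lt hjm)).symm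
          _ ≤ 2 ^ m * (j.factorial * (m - j).factorial) := by
              rw [mul_assoc]
              exact Nat.mul_le_mul_right _ (choose_le_two_pow' m j)
      exact_mod_cast h1
    have h4 : (4 : ℝ) ^ m = 2 ^ m * 2 ^ m := by
      rw [← mul_pow]; norm_num
    have hk0 : (0 : ℝ) ≤ (k : ℝ) + 1 := by positivity
    have h2m : (0 : ℝ) ≤ (2 : ℝ) ^ m := by positivity
    have key := mul_le_mul_of_nonneg_left hm! (mul_nonneg h2m hk0)
    rw [h4]
    nlinarith [key]
  rw [hterm]
  calc (lam * t) ^ m * ∑ j ∈ Finset.Ico 1 m,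
        ((m - 1).choose j : ℝ) * ((k + 1).factorial : ℝ) / (((k + 1) + j).factorial : ℝ) *
          (η₁ * p / (η₁ + η₂)) ^ j * (η₂ * q / (η₁ + η₂)) ^ (m - j) / ((m - j).factorial : ℝ)
      ≤ (lam * t) ^ m * ((m - 1) • ((4 : ℝ) ^ m / (((k : ℝ) + 1) * (m.factorial : ℝ)))) := by
        apply mul_le_mul_of_nonneg_left _ (by positivity)
        have := Finset.sum_le_card_nsmul (Finset.Ico 1 m) _ _ hbnd
        simpa [Nat.card_Ico] using this
    _ ≤ (8 * (lam * t)) ^ m / (m.factorial : ℝ) / ((k : ℝ) + 1) := by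
        rw [nsmul_eq_mul]
        have hcard : ((m - 1 : ℕ) : ℝ) ≤ 2 ^ m := by
          have : m - 1 ≤ 2 ^ m := le_of_lt (lt_of_le_of_lt (Nat.sub_le m 1) (Nat.lt_two_pow_self (n := m)))
          exact_mod_cast this
        have h8 : (8 * (lam * t)) ^ m = 2 ^ m * 4 ^ m * (lam * t) ^ m := by
          rw [show (8 : ℝ) * (lam * t) = 2 * 4 * (lam * t) from by norm_num, mul_pow, mul_pow]
        rw [h8, div_div]
        have h1 : (lam * t) ^ m * (((m - 1 : ℕ) : ℝ) * (4 ^ m / (((k : ℝ) + 1) * (m.factorial : ℝ)))) =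
            ((m - 1 : ℕ) : ℝ) * ((lam * t) ^ m * 4 ^ m) / ((m.factorial : ℝ) * ((k : ℝ) + 1)) := by
          ring
        rw [h1]
        refine (div_le_div_iff_of_pos_right (by positivity)).mpr ?_
        nlinarith [mul_le_mul_of_nonneg_right hcard
          (by positivity : (0 : ℝ) ≤ (lam * t) ^ m * 4 ^ m)]

lemma hterm_summable (lam t η₁ η₂ p q : ℝ) (hlt : 0 ≤ lam * t) (hη₁ : 0 < η₁) (hη₂ : 0 < η₂)
    (hp : 0 < p) (hq : 0 < q) (hpq : p + q = 1) (k : ℕ) :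
    Summable (fun m => hterm lam t η₁ η₂ p q k m) :=
  Summable.of_nonneg_of_le (hterm_nonneg lam t η₁ η₂ p q hlt hη₁ hη₂ hp.le hq.le k)
    (hterm_le lam t η₁ η₂ p q hlt hη₁ hη₂ hp hq hpq k)
    ((Real.summable_pow_div_factorial (8 * (lam * t))).div_const ((k : ℝ) + 1))

lemma hterm_tsum_le (lam t η₁ η₂ p q : ℝ) (hlt : 0 ≤ lam * t) (hη₁ : 0 < η₁) (hη₂ : 0 < η₂)
    (hp : 0 < p) (hq : 0 < q) (hpq : p + q = 1) (k : ℕ) :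
    ∑' m, hterm lam t η₁ η₂ p q k m ≤ Real.exp (8 * (lam * t)) / ((k : ℝ) + 1) := by
  have h := Summable.tsum_le_tsum (hterm_le lam t η₁ η₂ p q hlt hη₁ hη₂ hp hq hpq k)
    (hterm_summable lam t η₁ η₂ p q hlt hη₁ hη₂ hp hq hpq k)
    ((Real.summable_pow_div_factorial (8 * (lam * t))).div_const ((k : ℝ) + 1))
  rwa [tsum_div_const, real_exp_tsum] at h

lemma hterm_tsum_pos (lam t η₁ η₂ p q : ℝ) (hlt : 0 < lam * t) (hη₁ : 0 < η₁) (hη₂ : 0 < η₂)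
    (hp : 0 < p) (hq : 0 < q) (hpq : p + q = 1) (k : ℕ) :
    0 < ∑' m, hterm lam t η₁ η₂ p q k m := by
  have hE : 0 < η₁ + η₂ := by positivity
  refine Summable.tsum_pos (hterm_summable lam t η₁ η₂ p q hlt.le hη₁ hη₂ hp hq hpq k)
    (hterm_nonneg lam t η₁ η₂ p q hlt.le hη₁ hη₂ hp.le hq.le k) 2 ?_
  rw [hterm, show Finset.Ico 1 2 = {1} from rfl, Finset.sum_singleton]
  have : ((2 - 1 : ℕ).choose 1 : ℝ) = 1 := by norm_num
  rw [this]
  positivity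

lemma akey (lam t η₁ η₂ p q : ℝ) (ht : 0 < t) (hlam : 0 < lam) (hη₁ : 0 < η₁) (hη₂ : 0 < η₂)
    (hp : 0 < p) (hq : 0 < q) (hpq : p + q = 1) (k : ℕ) :
    0 < aCoef lam t η₁ η₂ p q k - aHat lam t η₁ η₂ p q k ∧
      aCoef lam t η₁ η₂ p q k - aHat lam t η₁ η₂ p q k ≤
        Real.exp (8 * (lam * t)) * aHat lam t η₁ η₂ p q k / ((k : ℝ) + 1) := by
  have hlt : 0 < lam * t := by positivity
  have hE : 0 < η₁ + η₂ := by positivity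
  have hgs : Summable (fun m : ℕ => (η₂ * lam * t * q / (η₁ + η₂)) ^ m / (m.factorial : ℝ)) :=
    Real.summable_pow_div_factorial _
  have hhs := hterm_summable lam t η₁ η₂ p q hlt.le hη₁ hη₂ hp hq hpq k
  have hC : 0 < Real.exp (-(lam * t)) * (η₁ * lam * t * p) ^ (k + 1) /
      ((k.factorial : ℝ) * ((k + 1).factorial : ℝ)) := by positivity
  have hAC : aCoef lam t η₁ η₂ p q k =
      Real.exp (-(lam * t)) * (η₁ * lam * t * p) ^ (k + 1) /
          ((k.factorial : ℝ) * ((k + 1).factorial : ℝ)) *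
        (Real.exp (η₂ * lam * t * q / (η₁ + η₂)) + ∑' m, hterm lam t η₁ η₂ p q k m) := by
    rw [aCoef, ← tsum_mul_left,
      tsum_congr (fun m => term_eq lam t η₁ η₂ p q hlt hη₁ hη₂ hp hq k m),
      tsum_mul_left, Summable.tsum_add hgs hhs, real_exp_tsum]
  have hAHat : aHat lam t η₁ η₂ p q k =
      Real.exp (-(lam * t)) * (η₁ * lam * t * p) ^ (k + 1) /
          ((k.factorial : ℝ) * ((k + 1).factorial : ℝ)) *
        Real.exp (η₂ * lam * t * q / (η₁ + η₂)) := by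
    rw [aHat, show η₂ * lam * t * q / (η₁ + η₂) - lam * t =
      -(lam * t) + η₂ * lam * t * q / (η₁ + η₂) from by ring, Real.exp_add]
    ring
  have hdiff : aCoef lam t η₁ η₂ p q k - aHat lam t η₁ η₂ p q k =
      Real.exp (-(lam * t)) * (η₁ * lam * t * p) ^ (k + 1) /
          ((k.factorial : ℝ) * ((k + 1).factorial : ℝ)) *
        ∑' m, hterm lam t η₁ η₂ p q k m := by
    rw [hAC, hAHat]; ring
  constructor
  · rw [hdiff]
    exact mul_pos hC (hterm_tsum_pos lam t η₁ η₂ p q hlt hη₁ hη₂ hp hq hpq k)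
  · rw [hdiff, hAHat]
    have h1 := hterm_tsum_le lam t η₁ η₂ p q hlt.le hη₁ hη₂ hp hq hpq k
    have h2 : (1 : ℝ) ≤ Real.exp (η₂ * lam * t * q / (η₁ + η₂)) :=
      Real.one_le_exp (by positivity)
    have h3 := Real.exp_pos (8 * (lam * t))
    calc Real.exp (-(lam * t)) * (η₁ * lam * t * p) ^ (k + 1) /
            ((k.factorial : ℝ) * ((k + 1).factorial : ℝ)) *
          ∑' m, hterm lam t η₁ η₂ p q k m
        ≤ Real.exp (-(lam * t)) * (η₁ * lam * t * p) ^ (k + 1) /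
              ((k.factorial : ℝ) * ((k + 1).factorial : ℝ)) *
            (Real.exp (8 * (lam * t)) / ((k : ℝ) + 1)) :=
          mul_le_mul_of_nonneg_left h1 hC.le
      _ ≤ Real.exp (8 * (lam * t)) *
            (Real.exp (-(lam * t)) * (η₁ * lam * t * p) ^ (k + 1) /
                ((k.factorial : ℝ) * ((k + 1).factorial : ℝ)) *
              Real.exp (η₂ * lam * t * q / (η₁ + η₂))) / ((k : ℝ) + 1) := by
          rw [show Real.exp (-(lam * t)) * (η₁ * lam * t * p) ^ (k + 1) /
              ((k.factorial : ℝ) * ((k + 1).factorial : ℝ)) *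
              (Real.exp (8 * (lam * t)) / ((k : ℝ) + 1)) =
              Real.exp (-(lam * t)) * (η₁ * lam * t * p) ^ (k + 1) /
              ((k.factorial : ℝ) * ((k + 1).factorial : ℝ)) *
              Real.exp (8 * (lam * t)) / ((k : ℝ) + 1) from by ring]
          refine (div_le_div_iff_of_pos_right (by positivity)).mpr ?_
          nlinarith [mul_le_mul_of_nonneg_left h2 (mul_nonneg hC.le h3.le)]

lemma QP_swap (η₁ η₂ p q : ℝ) (n k : ℕ) :
    Qcoef η₁ η₂ p q n k = Pcoef η₂ η₁ q p n k := by
  unfold Qcoef Pcoef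
  rw [add_comm η₂ η₁]
  split
  · rfl
  · exact Finset.sum_congr rfl fun i _ => by ring

lemma bCoef_swap (lam t η₁ η₂ p q : ℝ) (k : ℕ) :
    bCoef lam t η₁ η₂ p q k = aCoef lam t η₂ η₁ q p k := by
  unfold bCoef aCoef
  congr 1
  exact tsum_congr fun m => by rw [QP_swap]

lemma bHat_swap (lam t η₁ η₂ p q : ℝ) (k : ℕ) :
    bHat lam t η₁ η₂ p q k = aHat lam t η₂ η₁ q p k := by
  unfold bHat aHat
  rw [add_comm η₂ η₁]


/-- Theorem on approximation of the coefficients `a_k` and `b_k`.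
There exist positive constants `c₁`, `c₂`, independent of `k`, such that
`0 < a_k − â_k ≤ c₁ â_k/(k+1)` and `0 < b_k − b̂_k ≤ c₂ b̂_k/(k+1)` for all `k ≥ 0`. -/
theorem coefficient_approximation
    (t lam η₁ η₂ p q : ℝ)
    (ht : 0 < t) (hlam : 0 < lam) (hη₁ : 1 < η₁) (hη₂ : 0 < η₂)
    (hp : 0 < p) (hq : 0 < q) (hpq : p + q = 1) :
    ∃ c₁ : ℝ, 0 < c₁ ∧ ∃ c₂ : ℝ, 0 < c₂ ∧ ∀ k : ℕ,
      (0 < aCoef lam t η₁ η₂ p q k - aHat lam t η₁ η₂ p q k ∧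
        aCoef lam t η₁ η₂ p q k - aHat lam t η₁ η₂ p q k ≤
          c₁ * aHat lam t η₁ η₂ p q k / ((k : ℝ) + 1)) ∧
      (0 < bCoef lam t η₁ η₂ p q k - bHat lam t η₁ η₂ p q k ∧
        bCoef lam t η₁ η₂ p q k - bHat lam t η₁ η₂ p q k ≤
          c₂ * bHat lam t η₁ η₂ p q k / ((k : ℝ) + 1)) := by
  have hη₁0 : 0 < η₁ := lt_trans one_pos hη₁
  refine ⟨Real.exp (8 * (lam * t)), Real.exp_pos _,
    Real.exp (8 * (lam * t)), Real.exp_pos _, fun k => ?_⟩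
  refine ⟨akey lam t η₁ η₂ p q ht hlam hη₁0 hη₂ hp hq hpq k, ?_⟩
  rw [bCoef_swap, bHat_swap]
  exact akey lam t η₂ η₁ q p ht hlam hη₂ hη₁0 hq hp (by linarith) k
end
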